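/- arXiv:2004.07912 — 6 statements merged into one kernel-verified Lean document; each statement's English description precedes it below -/
import Mathlib

section
/- Let {X^n} be a quasi-visual approximation of a bounded metric space (S,d). For distinct x,y ∈ S define m(x,y) as the largest n ∈ ℕ₀ such that there exist X,Y ∈ X^n with x ∈ X, y ∈ Y, and X∩Y ≠ ∅. Then there is a constant C ≥ 1, depending only on the constants of the approximation, such that for all distinct x,y ∈ S and every m-tile X^m ∈ X^{m(x,y)} containing x, one has (1/C)·diam(X^m) ≤ d(x,y) ≤ C·diam(X^m). -/
open Set Metric

/-- A quasi-visual approximation of a bounded metric space `S`: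
a sequence of finite covers `𝒳 n` of `S` with `𝒳 0 = {univ}` satisfying
(i) intersecting same-level tiles have comparable diameters,
(ii) `dist(X,Y) ≳ diam X` for disjoint same-level tiles,
(iii) intersecting tiles of consecutive levels have comparable diameters,
(iv) diameters decay by a factor `lam ∈ (0,1)` every `k₀` levels along intersecting tiles. -/
def IsQVA {S : Type*} [MetricSpace S] (𝒳 : ℕ → Set (Set S)) : Prop :=
  (∀ n, (𝒳 n).Finite) ∧
  (∀ n, ⋃₀ 𝒳 n = Set.univ) ∧
  (𝒳 0 = {Set.univ}) ∧
  (∃ C₁ : ℝ, 1 ≤ C₁ ∧ ∀ n, ∀ X ∈ 𝒳 n, ∀ Y ∈ 𝒳 n, (X ∩ Y).Nonempty →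
    Metric.diam X ≤ C₁ * Metric.diam Y) ∧
  (∃ c₂ : ℝ, 0 < c₂ ∧ ∀ n, ∀ X ∈ 𝒳 n, ∀ Y ∈ 𝒳 n, X ∩ Y = ∅ →
    ∀ x ∈ X, ∀ y ∈ Y, c₂ * Metric.diam X ≤ dist x y) ∧
  (∃ C₃ : ℝ, 1 ≤ C₃ ∧ ∀ n, ∀ X ∈ 𝒳 n, ∀ Y ∈ 𝒳 (n + 1), (X ∩ Y).Nonempty →
    Metric.diam X ≤ C₃ * Metric.diam Y ∧ Metric.diam Y ≤ C₃ * Metric.diam X) ∧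
  (∃ k₀ : ℕ, 0 < k₀ ∧ ∃ lam : ℝ, 0 < lam ∧ lam < 1 ∧
    ∀ n, ∀ X ∈ 𝒳 n, ∀ Y ∈ 𝒳 (n + k₀), (X ∩ Y).Nonempty →
    Metric.diam Y ≤ lam * Metric.diam X)

theorem stmt4 {S : Type*} [MetricSpace S]
    (hBdd : Bornology.IsBounded (Set.univ : Set S))
    (𝒳 : ℕ → Set (Set S)) (hQVA : IsQVA 𝒳) :
    ∃ C : ℝ, 1 ≤ C ∧ ∀ x y : S, x ≠ y → ∀ m : ℕ,
      -- `m = m(x,y)` is the largest level at which `x` and `y` lie in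
      -- intersecting tiles
      ((∃ X ∈ 𝒳 m, ∃ Y ∈ 𝒳 m, x ∈ X ∧ y ∈ Y ∧ (X ∩ Y).Nonempty) ∧
        (∀ n, m < n → ¬ ∃ X ∈ 𝒳 n, ∃ Y ∈ 𝒳 n, x ∈ X ∧ y ∈ Y ∧ (X ∩ Y).Nonempty)) →
      ∀ X ∈ 𝒳 m, x ∈ X →
        Metric.diam X / C ≤ dist x y ∧ dist x y ≤ C * Metric.diam X := by
  obtain ⟨-, hcov, -, ⟨C₁, hC₁, h1⟩, ⟨c₂, hc₂, h2⟩, ⟨C₃, hC₃, h3⟩, -⟩ := hQVA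
  refine ⟨C₁ * (1 + C₁) + C₃ / c₂, ?_, ?_⟩
  · nlinarith [div_nonneg (le_trans zero_le_one hC₃) hc₂.le]
  intro x y hxy m ⟨⟨X', hX', Y', hY', hxX', hyY', hXY'⟩, hmax⟩ X hX hxX
  have hC : (0:ℝ) < C₁ * (1 + C₁) + C₃ / c₂ := by
    nlinarith [div_nonneg (le_trans zero_le_one hC₃) hc₂.le]
  -- find tiles at level m+1 containing x, y; they are disjoint
  have hxU : x ∈ ⋃₀ 𝒳 (m + 1) := by rw [hcov]; trivial
  have hyU : y ∈ ⋃₀ 𝒳 (m + 1) := by rw [hcov]; trivial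
  obtain ⟨X₁, hX₁, hxX₁⟩ := hxU
  obtain ⟨Y₁, hY₁, hyY₁⟩ := hyU
  have hdisj : X₁ ∩ Y₁ = ∅ := by
    by_contra h
    exact hmax (m + 1) (Nat.lt_succ_self m)
      ⟨X₁, hX₁, Y₁, hY₁, hxX₁, hyY₁, Set.nonempty_iff_ne_empty.2 h⟩
  have hlow : c₂ * Metric.diam X₁ ≤ dist x y :=
    h2 (m + 1) X₁ hX₁ Y₁ hY₁ hdisj x hxX₁ y hyY₁
  have hXX₁ : Metric.diam X ≤ C₃ * Metric.diam X₁ :=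
    (h3 m X hX X₁ hX₁ ⟨x, hxX, hxX₁⟩).1
  have hbX' : Bornology.IsBounded X' := hBdd.subset (Set.subset_univ _)
  have hbY' : Bornology.IsBounded Y' := hBdd.subset (Set.subset_univ _)
  obtain ⟨z, hzX', hzY'⟩ := hXY'
  have hdX : dist x z ≤ Metric.diam X' := Metric.dist_le_diam_of_mem hbX' hxX' hzX'
  have hdY : dist z y ≤ Metric.diam Y' := Metric.dist_le_diam_of_mem hbY' hzY' hyY'
  have hY'X' : Metric.diam Y' ≤ C₁ * Metric.diam X' :=
    h1 m Y' hY' X' hX' ⟨z, hzY', hzX'⟩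
  have hX'X : Metric.diam X' ≤ C₁ * Metric.diam X :=
    h1 m X' hX' X hX ⟨x, hxX', hxX⟩
  have hdnn : 0 ≤ Metric.diam X := Metric.diam_nonneg
  constructor
  · rw [div_le_iff₀ hC]
    have h4 : Metric.diam X ≤ (C₃ / c₂) * dist x y := by
      rw [div_mul_eq_mul_div, le_div_iff₀ hc₂]
      calc Metric.diam X * c₂ ≤ (C₃ * Metric.diam X₁) * c₂ := by
            exact mul_le_mul_of_nonneg_right hXX₁ hc₂.le
        _ = C₃ * (c₂ * Metric.diam X₁) := by ring
        _ ≤ C₃ * dist x y := by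
            exact mul_le_mul_of_nonneg_left hlow (le_trans zero_le_one hC₃)
    have hdist : 0 ≤ dist x y := dist_nonneg
    nlinarith [mul_nonneg (mul_nonneg (le_trans zero_le_one hC₁)
      (by linarith : (0:ℝ) ≤ 1 + C₁)) hdist]
  · have : dist x y ≤ Metric.diam X' + Metric.diam Y' :=
      (dist_triangle x z y).trans (by linarith)
    have h5 : dist x y ≤ (1 + C₁) * Metric.diam X' := by linarith
    have h6 : (1 + C₁) * Metric.diam X' ≤ (1 + C₁) * (C₁ * Metric.diam X) :=
      mul_le_mul_of_nonneg_left hX'X (by linarith)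
    have hdd : 0 ≤ C₃ / c₂ * Metric.diam X :=
      mul_nonneg (div_nonneg (le_trans zero_le_one hC₃) hc₂.le) hdnn
    nlinarith
end

section
/- Let d₁ and d₂ be bounded metrics on a set S, suppose a sequence of finite covers {X^n} of S is a quasi-visual approximation of (S,d₁), and suppose the identity map id : (S,d₁) → (S,d₂) is a quasisymmetric homeomorphism. Then {X^n} is also a quasi-visual approximation of (S,d₂). -/
open Set Metric

variable {S : Type*}

/-- The distance of `x` and `y` with respect to the metric `m` on `S`. -/
noncomputable def mdist (m : MetricSpace S) (x y : S) : ℝ :=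
  letI := m; dist x y

/-- The diameter of `A ⊆ S` with respect to the metric `m` on `S`. -/
noncomputable def mdiam (m : MetricSpace S) (A : Set S) : ℝ :=
  letI := m; Metric.diam A

/-- `(S, m)` is a bounded metric space. -/
def mBounded (m : MetricSpace S) : Prop :=
  letI := m; Bornology.IsBounded (Set.univ : Set S)

/-- A distortion function: a homeomorphism `η : [0,∞) → [0,∞)`. -/
def IsGauge (η : ℝ → ℝ) : Prop :=
  η 0 = 0 ∧ StrictMonoOn η (Set.Ici 0) ∧ ContinuousOn η (Set.Ici 0) ∧
    ∀ s : ℝ, 0 ≤ s → ∃ t : ℝ, 0 ≤ t ∧ η t = s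

/-- `𝒳` is a quasi-visual approximation of `S` with respect to the metric `m`. -/
def IsQVAWith (m : MetricSpace S) (𝒳 : ℕ → Set (Set S)) : Prop :=
  (∀ n, (𝒳 n).Finite) ∧
  (∀ n, ⋃₀ 𝒳 n = Set.univ) ∧
  (𝒳 0 = {Set.univ}) ∧
  (∃ C₁ : ℝ, 1 ≤ C₁ ∧ ∀ n, ∀ X ∈ 𝒳 n, ∀ Y ∈ 𝒳 n, (X ∩ Y).Nonempty →
    mdiam m X ≤ C₁ * mdiam m Y) ∧
  (∃ c₂ : ℝ, 0 < c₂ ∧ ∀ n, ∀ X ∈ 𝒳 n, ∀ Y ∈ 𝒳 n, X ∩ Y = ∅ →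
    ∀ x ∈ X, ∀ y ∈ Y, c₂ * mdiam m X ≤ mdist m x y) ∧
  (∃ C₃ : ℝ, 1 ≤ C₃ ∧ ∀ n, ∀ X ∈ 𝒳 n, ∀ Y ∈ 𝒳 (n + 1), (X ∩ Y).Nonempty →
    mdiam m X ≤ C₃ * mdiam m Y ∧ mdiam m Y ≤ C₃ * mdiam m X) ∧
  (∃ k₀ : ℕ, 0 < k₀ ∧ ∃ lam : ℝ, 0 < lam ∧ lam < 1 ∧
    ∀ n, ∀ X ∈ 𝒳 n, ∀ Y ∈ 𝒳 (n + k₀), (X ∩ Y).Nonempty →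
    mdiam m Y ≤ lam * mdiam m X)

/- ### Auxiliary lemmas -/

lemma mdiam_nonneg (m : MetricSpace S) (A : Set S) : 0 ≤ mdiam m A := by
  letI := m; exact Metric.diam_nonneg

lemma mdist_nonneg' (m : MetricSpace S) (x y : S) : 0 ≤ mdist m x y := by
  letI := m; exact dist_nonneg

lemma mdist_comm' (m : MetricSpace S) (x y : S) : mdist m x y = mdist m y x := by
  letI := m; exact dist_comm x y

lemma mdist_triangle' (m : MetricSpace S) (x y z : S) :
    mdist m x z ≤ mdist m x y + mdist m y z := by
  letI := m; exact dist_triangle x y z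

lemma mdist_le_mdiam (m : MetricSpace S) (hb : mBounded m) {A : Set S} {x y : S}
    (hx : x ∈ A) (hy : y ∈ A) : mdist m x y ≤ mdiam m A := by
  letI := m
  exact Metric.dist_le_diam_of_mem (Bornology.IsBounded.subset hb (Set.subset_univ A)) hx hy

lemma mdiam_le (m : MetricSpace S) {A : Set S} {C : ℝ} (hC : 0 ≤ C)
    (h : ∀ x ∈ A, ∀ y ∈ A, mdist m x y ≤ C) : mdiam m A ≤ C := by
  letI := m
  exact Metric.diam_le_of_forall_dist_le hC h

lemma gaugePos' {η : ℝ → ℝ} (hη : IsGauge η) {t : ℝ} (ht : 0 < t) : 0 < η t := by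
  have := hη.2.1 (Set.self_mem_Ici) (Set.mem_Ici.mpr ht.le) ht
  rw [hη.1] at this; exact this

/-- If `A` and `B` share a point and `diam₁ A ≤ C · diam₁ B`, then
`diam₂ A ≤ 2 η(3C) · diam₂ B`. -/
lemma key_diam (m₁ m₂ : MetricSpace S) (hb₁ : mBounded m₁) (hb₂ : mBounded m₂)
    (η : ℝ → ℝ) (hη : IsGauge η)
    (hqs : ∀ t : ℝ, 0 < t → ∀ x y z : S,
      mdist m₁ x y ≤ t * mdist m₁ x z → mdist m₂ x y ≤ η t * mdist m₂ x z)
    {A B : Set S} {p : S} (hpA : p ∈ A) (hpB : p ∈ B)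
    {C : ℝ} (hC : 0 < C) (hd : mdiam m₁ A ≤ C * mdiam m₁ B) :
    mdiam m₂ A ≤ 2 * η (3 * C) * mdiam m₂ B := by
  have hη3C : 0 < η (3 * C) := gaugePos' hη (by linarith)
  have hrhs : 0 ≤ 2 * η (3 * C) * mdiam m₂ B :=
    mul_nonneg (by linarith) (mdiam_nonneg m₂ B)
  rcases le_or_gt (mdiam m₁ B) 0 with h0 | hBpos
  · -- B has diameter 0; then A is a subsingleton and mdiam m₂ A = 0
    have hB0 : mdiam m₁ B = 0 := le_antisymm h0 (mdiam_nonneg m₁ B)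
    have hA0 : mdiam m₁ A = 0 := by
      have := mdiam_nonneg m₁ A
      nlinarith
    have hsub : ∀ a ∈ A, ∀ b ∈ A, a = b := by
      intro a ha b hb
      have h1 : mdist m₁ a b ≤ 0 := hA0 ▸ mdist_le_mdiam m₁ hb₁ ha hb
      have h2 : mdist m₁ a b = 0 := le_antisymm h1 (mdist_nonneg' m₁ a b)
      letI := m₁
      exact dist_eq_zero.mp h2
    have : mdiam m₂ A ≤ 0 := by
      apply mdiam_le m₂ le_rfl
      intro a ha b hb
      rw [hsub a ha b hb]
      letI := m₂
      simp [mdist]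
    linarith
  · -- find u v ∈ B far apart
    have hex : ∃ u ∈ B, ∃ v ∈ B, (3/4) * mdiam m₁ B < mdist m₁ u v := by
      by_contra h
      push_neg at h
      have := mdiam_le m₁ (by linarith) h
      linarith
    obtain ⟨u, hu, v, hv, huv⟩ := hex
    have hq : ∃ q ∈ B, (3/8) * mdiam m₁ B < mdist m₁ p q := by
      rcases le_total (mdist m₁ p u) (mdist m₁ p v) with h | h
      · refine ⟨v, hv, ?_⟩
        have ht := mdist_triangle' m₁ u p v
        have hc := mdist_comm' m₁ u p
        linarith
      · refine ⟨u, hu, ?_⟩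
        have ht := mdist_triangle' m₁ u p v
        have hc := mdist_comm' m₁ u p
        have hc2 := mdist_comm' m₁ u v
        linarith
    obtain ⟨q, hqB, hpq⟩ := hq
    have hbound : ∀ x ∈ A, mdist m₂ p x ≤ η (3 * C) * mdiam m₂ B := by
      intro x hx
      have h1 : mdist m₁ p x ≤ 3 * C * mdist m₁ p q := by
        have f1 := mdist_le_mdiam m₁ hb₁ hpA hx
        nlinarith [mdist_nonneg' m₁ p q]
      have h2 := hqs (3 * C) (by linarith) p x q h1
      have h3 : mdist m₂ p q ≤ mdiam m₂ B := mdist_le_mdiam m₂ hb₂ hpB hqB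
      calc mdist m₂ p x ≤ η (3 * C) * mdist m₂ p q := h2
        _ ≤ η (3 * C) * mdiam m₂ B := mul_le_mul_of_nonneg_left h3 hη3C.le
    apply mdiam_le m₂ hrhs
    intro x hx y hy
    calc mdist m₂ x y ≤ mdist m₂ x p + mdist m₂ p y := mdist_triangle' m₂ x p y
      _ = mdist m₂ p x + mdist m₂ p y := by rw [mdist_comm' m₂ x p]
      _ ≤ η (3 * C) * mdiam m₂ B + η (3 * C) * mdiam m₂ B :=
          add_le_add (hbound x hx) (hbound y hy)
      _ = 2 * η (3 * C) * mdiam m₂ B := by ring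

/-- Iterated geometric decay in the source metric. -/
lemma decay_iter (m₁ : MetricSpace S) (𝒳 : ℕ → Set (Set S))
    (hcov : ∀ n, ⋃₀ 𝒳 n = Set.univ) (k₀ : ℕ) {lam : ℝ} (hlam0 : 0 ≤ lam)
    (hdecay : ∀ n, ∀ X ∈ 𝒳 n, ∀ Y ∈ 𝒳 (n + k₀), (X ∩ Y).Nonempty →
      mdiam m₁ Y ≤ lam * mdiam m₁ X) :
    ∀ j n, ∀ X ∈ 𝒳 n, ∀ Y ∈ 𝒳 (n + (j + 1) * k₀), ∀ p, p ∈ X → p ∈ Y →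
      mdiam m₁ Y ≤ lam ^ (j + 1) * mdiam m₁ X := by
  intro j
  induction j with
  | zero =>
    intro n X hX Y hY p hpX hpY
    have hY' : Y ∈ 𝒳 (n + k₀) := by simpa using hY
    simpa using hdecay n X hX Y hY' ⟨p, hpX, hpY⟩
  | succ j ih =>
    intro n X hX Y hY p hpX hpY
    have hpcov : p ∈ ⋃₀ 𝒳 (n + k₀) := by rw [hcov]; trivial
    obtain ⟨Z, hZ, hpZ⟩ := hpcov
    have h1 : mdiam m₁ Z ≤ lam * mdiam m₁ X := hdecay n X hX Z hZ ⟨p, hpX, hpZ⟩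
    have hY' : Y ∈ 𝒳 (n + k₀ + (j + 1) * k₀) := by
      have : n + k₀ + (j + 1) * k₀ = n + (j + 1 + 1) * k₀ := by ring
      rw [this]; exact hY
    have h2 : mdiam m₁ Y ≤ lam ^ (j + 1) * mdiam m₁ Z := ih (n + k₀) Z hZ Y hY' p hpZ hpY
    calc mdiam m₁ Y ≤ lam ^ (j + 1) * mdiam m₁ Z := h2
      _ ≤ lam ^ (j + 1) * (lam * mdiam m₁ X) :=
          mul_le_mul_of_nonneg_left h1 (pow_nonneg hlam0 _)
      _ = lam ^ (j + 1 + 1) * mdiam m₁ X := by ring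

theorem stmt5 (m₁ m₂ : MetricSpace S)
    (hb₁ : mBounded m₁) (hb₂ : mBounded m₂)
    (𝒳 : ℕ → Set (Set S))
    (hQVA : IsQVAWith m₁ 𝒳)
    -- the identity map `id : (S, m₁) → (S, m₂)` is a quasisymmetry
    (η : ℝ → ℝ) (hη : IsGauge η)
    (hqs : ∀ t : ℝ, 0 < t → ∀ x y z : S,
      mdist m₁ x y ≤ t * mdist m₁ x z → mdist m₂ x y ≤ η t * mdist m₂ x z) :
    IsQVAWith m₂ 𝒳 := by
  obtain ⟨hfin, hcov, hzero, ⟨C₁, hC₁, hsame⟩, ⟨c₂, hc₂, hsep⟩,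
    ⟨C₃, hC₃, hadj⟩, ⟨k₀, hk₀, lam, hlam0, hlam1, hdecay⟩⟩ := hQVA
  refine ⟨hfin, hcov, hzero, ?_, ?_, ?_, ?_⟩
  · -- same-level comparability
    refine ⟨max 1 (2 * η (3 * C₁)), le_max_left _ _, ?_⟩
    intro n X hX Y hY ⟨p, hpX, hpY⟩
    have h := key_diam m₁ m₂ hb₁ hb₂ η hη hqs hpX hpY (by linarith : (0:ℝ) < C₁)
      (hsame n X hX Y hY ⟨p, hpX, hpY⟩)
    calc mdiam m₂ X ≤ 2 * η (3 * C₁) * mdiam m₂ Y := h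
      _ ≤ max 1 (2 * η (3 * C₁)) * mdiam m₂ Y :=
          mul_le_mul_of_nonneg_right (le_max_right _ _) (mdiam_nonneg m₂ Y)
  · -- separation
    have hηc : 0 < η (1 / c₂) := gaugePos' hη (by positivity)
    refine ⟨1 / (2 * η (1 / c₂)), by positivity, ?_⟩
    intro n X hX Y hY hdisj x hx y hy
    have hm := hsep n X hX Y hY hdisj x hx y hy
    have hdX : mdiam m₁ X ≤ (1 / c₂) * mdist m₁ x y := by
      rw [one_div, inv_mul_eq_div, le_div_iff₀ hc₂]
      linarith [hm]
    have hw : ∀ w ∈ X, mdist m₂ x w ≤ η (1 / c₂) * mdist m₂ x y := by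
      intro w hwX
      apply hqs (1 / c₂) (by positivity) x w y
      calc mdist m₁ x w ≤ mdiam m₁ X := mdist_le_mdiam m₁ hb₁ hx hwX
        _ ≤ (1 / c₂) * mdist m₁ x y := hdX
    have hdiam : mdiam m₂ X ≤ 2 * η (1 / c₂) * mdist m₂ x y := by
      apply mdiam_le m₂ (mul_nonneg (by linarith) (mdist_nonneg' m₂ x y))
      intro w hw1 w' hw2
      calc mdist m₂ w w' ≤ mdist m₂ w x + mdist m₂ x w' := mdist_triangle' m₂ w x w'
        _ = mdist m₂ x w + mdist m₂ x w' := by rw [mdist_comm' m₂ w x]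
        _ ≤ η (1 / c₂) * mdist m₂ x y + η (1 / c₂) * mdist m₂ x y :=
            add_le_add (hw w hw1) (hw w' hw2)
        _ = 2 * η (1 / c₂) * mdist m₂ x y := by ring
    rw [one_div, inv_mul_le_iff₀ (by positivity)]
    calc mdiam m₂ X ≤ 2 * η (1 / c₂) * mdist m₂ x y := hdiam
      _ = 2 * η (1 / c₂) * mdist m₂ x y := rfl
  · -- adjacent-level comparability
    refine ⟨max 1 (2 * η (3 * C₃)), le_max_left _ _, ?_⟩
    intro n X hX Y hY ⟨p, hpX, hpY⟩
    obtain ⟨hXY, hYX⟩ := hadj n X hX Y hY ⟨p, hpX, hpY⟩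
    have hC₃0 : (0:ℝ) < C₃ := by linarith
    constructor
    · calc mdiam m₂ X ≤ 2 * η (3 * C₃) * mdiam m₂ Y :=
            key_diam m₁ m₂ hb₁ hb₂ η hη hqs hpX hpY hC₃0 hXY
        _ ≤ max 1 (2 * η (3 * C₃)) * mdiam m₂ Y :=
            mul_le_mul_of_nonneg_right (le_max_right _ _) (mdiam_nonneg m₂ Y)
    · calc mdiam m₂ Y ≤ 2 * η (3 * C₃) * mdiam m₂ X :=
            key_diam m₁ m₂ hb₁ hb₂ η hη hqs hpY hpX hC₃0 hYX
        _ ≤ max 1 (2 * η (3 * C₃)) * mdiam m₂ X :=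
            mul_le_mul_of_nonneg_right (le_max_right _ _) (mdiam_nonneg m₂ X)
  · -- geometric decay
    -- choose δ with η small on [0, δ)
    have hcont0 : ContinuousWithinAt η (Set.Ici 0) 0 :=
      hη.2.2.1.continuousWithinAt Set.self_mem_Ici
    rw [Metric.continuousWithinAt_iff] at hcont0
    obtain ⟨δ, hδpos, hδ⟩ := hcont0 (1/4) (by norm_num)
    obtain ⟨j, hj⟩ := exists_pow_lt_of_lt_one (show (0:ℝ) < δ / 3 by positivity) hlam1
    -- lam ^ (j+1) < δ / 3
    have hpow : lam ^ (j + 1) < δ / 3 := by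
      have : lam ^ (j + 1) ≤ lam ^ j := by
        rw [pow_succ]
        nlinarith [pow_nonneg hlam0.le j, pow_pos hlam0 j]
      linarith
    have hpowpos : 0 < lam ^ (j + 1) := pow_pos hlam0 _
    have hηsmall : η (3 * lam ^ (j + 1)) < 1/4 := by
      have hmem : (3 * lam ^ (j + 1) : ℝ) ∈ Set.Ici (0:ℝ) := by
        simp only [Set.mem_Ici]; positivity
      have hdist : dist (3 * lam ^ (j + 1)) 0 < δ := by
        rw [Real.dist_eq, sub_zero, abs_of_nonneg (by positivity)]
        linarith
      have := hδ hmem hdist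
      rw [hη.1, Real.dist_eq, sub_zero] at this
      calc η (3 * lam ^ (j + 1)) ≤ |η (3 * lam ^ (j + 1))| := le_abs_self _
        _ < 1/4 := this
    refine ⟨(j + 1) * k₀, by positivity, 1/2, by norm_num, by norm_num, ?_⟩
    intro n X hX Y hY ⟨p, hpX, hpY⟩
    have h1 : mdiam m₁ Y ≤ lam ^ (j + 1) * mdiam m₁ X :=
      decay_iter m₁ 𝒳 hcov k₀ hlam0.le hdecay j n X hX Y hY p hpX hpY
    have h2 : mdiam m₂ Y ≤ 2 * η (3 * lam ^ (j + 1)) * mdiam m₂ X :=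
      key_diam m₁ m₂ hb₁ hb₂ η hη hqs hpY hpX hpowpos h1
    have h3 : 2 * η (3 * lam ^ (j + 1)) ≤ 1/2 := by linarith
    calc mdiam m₂ Y ≤ 2 * η (3 * lam ^ (j + 1)) * mdiam m₂ X := h2
      _ ≤ (1/2) * mdiam m₂ X := mul_le_mul_of_nonneg_right h3 (mdiam_nonneg m₂ X)
end

section
/- Let (S,d) and (T,ρ) be bounded metric spaces, F : S → T a bijection, and {X^n}_{n∈ℕ₀} a quasi-visual approximation of (S,d). Then F is a quasisymmetric homeomorphism if and only if {F(X^n)}_{n∈ℕ₀} (where F(X^n) = {F(X) : X ∈ X^n}) is a quasi-visual approximation of (T,ρ). -/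
open Set Metric

open Bornology

lemma exists_far_point {S : Type*} [MetricSpace S] {X : Set S} {p : S} (hp : p ∈ X)
    (h : 0 < diam X) : ∃ b ∈ X, diam X ≤ 4 * dist p b := by
  by_contra hcon
  push_neg at hcon
  have hall : ∀ u ∈ X, ∀ v ∈ X, dist u v ≤ diam X / 2 := by
    intro u hu v hv
    have h1 := hcon u hu
    have h2 := hcon v hv
    have := dist_triangle u p v
    rw [dist_comm u p] at this
    linarith
  have := diam_le_of_forall_dist_le (by linarith : (0:ℝ) ≤ diam X / 2) hall
  linarith

lemma qs_diam {S T : Type*} [MetricSpace S] [MetricSpace T]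
    (hbS : IsBounded (univ : Set S)) (hbT : IsBounded (univ : Set T))
    {F : S → T} {η : ℝ → ℝ} (hη0 : η 0 = 0) (hmono : StrictMonoOn η (Set.Ici 0))
    (hqs : ∀ t : ℝ, 0 < t → ∀ x y z : S,
      dist x y ≤ t * dist x z → dist (F x) (F y) ≤ η t * dist (F x) (F z))
    {A B : Set S} {p : S} (hpA : p ∈ A) (hpB : p ∈ B) {K : ℝ} (hK : 0 < K)
    (hAB : diam A ≤ K * diam B) :
    diam (F '' A) ≤ 2 * η (4 * K) * diam (F '' B) := by
  have hbA : IsBounded A := hbS.subset (subset_univ _)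
  have hbFB : IsBounded (F '' B) := hbT.subset (subset_univ _)
  have hηpos : 0 < η (4 * K) := by
    have := hmono (le_refl (0:ℝ)) (by positivity : (0:ℝ) ≤ 4 * K) (by positivity)
    rwa [hη0] at this
  rcases eq_or_lt_of_le (diam_nonneg : (0:ℝ) ≤ diam B) with h0 | hpos
  · have hA0 : diam A ≤ 0 := by nlinarith
    have hsub : (F '' A).Subsingleton := by
      rintro _ ⟨a, ha, rfl⟩ _ ⟨a', ha', rfl⟩
      have h1 : dist a a' ≤ diam A := dist_le_diam_of_mem hbA ha ha'
      have : a = a' := by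
        rw [← dist_le_zero]; linarith
      rw [this]
    rw [diam_subsingleton hsub]
    positivity
  · obtain ⟨b, hbB2, hb4⟩ := exists_far_point hpB hpos
    apply diam_le_of_forall_dist_le (by positivity)
    rintro _ ⟨a, ha, rfl⟩ _ ⟨a', ha', rfl⟩
    have hdistb : ∀ a₀ ∈ A, dist (F p) (F a₀) ≤ η (4 * K) * diam (F '' B) := by
      intro a₀ ha₀
      have h1 : dist p a₀ ≤ 4 * K * dist p b := by
        have := dist_le_diam_of_mem hbA hpA ha₀
        nlinarith
      have h2 := hqs (4 * K) (by positivity) p a₀ b h1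
      have h3 : dist (F p) (F b) ≤ diam (F '' B) :=
        dist_le_diam_of_mem hbFB (mem_image_of_mem F hpB) (mem_image_of_mem F hbB2)
      nlinarith
    have h1 := hdistb a ha
    have h2 := hdistb a' ha'
    have := dist_triangle (F a) (F p) (F a')
    rw [dist_comm (F a) (F p)] at this
    linarith

lemma chain_decay {S : Type*} [MetricSpace S] {𝒴 : ℕ → Set (Set S)}
    (hcov : ∀ n, ⋃₀ 𝒴 n = univ) {k₀ : ℕ} {lam : ℝ} (hlam : 0 ≤ lam)
    (hiv : ∀ n, ∀ X ∈ 𝒴 n, ∀ Y ∈ 𝒴 (n + k₀), (X ∩ Y).Nonempty →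
      diam Y ≤ lam * diam X)
    (p : S) (n : ℕ) (X : Set S) (hX : X ∈ 𝒴 n) (hpX : p ∈ X) :
    ∀ (q : ℕ), ∀ Y ∈ 𝒴 (n + (q + 1) * k₀), p ∈ Y → diam Y ≤ lam ^ (q + 1) * diam X := by
  intro q
  induction q with
  | zero =>
    intro Y hY hpY
    have : Y ∈ 𝒴 (n + k₀) := by simpa using hY
    have := hiv n X hX Y this ⟨p, hpX, hpY⟩
    simpa using this
  | succ q ih =>
    intro Y hY hpY
    obtain ⟨Z, hZ, hpZ⟩ : ∃ Z ∈ 𝒴 (n + (q + 1) * k₀), p ∈ Z := by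
      have : p ∈ ⋃₀ 𝒴 (n + (q + 1) * k₀) := by rw [hcov]; trivial
      exact mem_sUnion.mp this
    have h1 := ih Z hZ hpZ
    have hY' : Y ∈ 𝒴 (n + (q + 1) * k₀ + k₀) := by
      have : n + (q + 1 + 1) * k₀ = n + (q + 1) * k₀ + k₀ := by ring
      rwa [this] at hY
    have h2 := hiv (n + (q + 1) * k₀) Z hZ Y hY' ⟨p, hpZ, hpY⟩
    have hd : (0:ℝ) ≤ diam X := diam_nonneg
    calc diam Y ≤ lam * diam Z := h2
      _ ≤ lam * (lam ^ (q + 1) * diam X) := mul_le_mul_of_nonneg_left h1 hlam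
      _ = lam ^ (q + 1 + 1) * diam X := by ring

lemma chain_comp {S : Type*} [MetricSpace S] {𝒴 : ℕ → Set (Set S)} {C₃ : ℝ}
    (hC₃ : 1 ≤ C₃)
    (hiii : ∀ n, ∀ X ∈ 𝒴 n, ∀ Y ∈ 𝒴 (n + 1), (X ∩ Y).Nonempty →
      diam X ≤ C₃ * diam Y ∧ diam Y ≤ C₃ * diam X)
    (chain : ℕ → Set S) (hmem : ∀ n, chain n ∈ 𝒴 n) (p : S) (hp : ∀ n, p ∈ chain n)
    (n : ℕ) : ∀ Δ : ℕ, diam (chain (n + Δ)) ≤ C₃ ^ Δ * diam (chain n) ∧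
      diam (chain n) ≤ C₃ ^ Δ * diam (chain (n + Δ)) := by
  intro Δ
  induction Δ with
  | zero => simp
  | succ Δ ih =>
    have h := hiii (n + Δ) (chain (n + Δ)) (hmem _) (chain (n + Δ + 1)) (hmem _)
      ⟨p, hp _, hp _⟩
    have hC₀ : (0:ℝ) < C₃ := lt_of_lt_of_le one_pos hC₃
    have hpw : (0:ℝ) ≤ C₃ ^ Δ := by positivity
    have hd1 : (0:ℝ) ≤ diam (chain (n + Δ)) := diam_nonneg
    have hd2 : (0:ℝ) ≤ diam (chain n) := diam_nonneg
    have hd3 : (0:ℝ) ≤ diam (chain (n + Δ + 1)) := diam_nonneg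
    constructor
    · calc diam (chain (n + (Δ + 1))) = diam (chain (n + Δ + 1)) := by ring_nf
        _ ≤ C₃ * diam (chain (n + Δ)) := h.2
        _ ≤ C₃ * (C₃ ^ Δ * diam (chain n)) := mul_le_mul_of_nonneg_left ih.1 hC₀.le
        _ = C₃ ^ (Δ + 1) * diam (chain n) := by ring
    · calc diam (chain n) ≤ C₃ ^ Δ * diam (chain (n + Δ)) := ih.2
        _ ≤ C₃ ^ Δ * (C₃ * diam (chain (n + Δ + 1))) :=
            mul_le_mul_of_nonneg_left h.1 hpw
        _ = C₃ ^ (Δ + 1) * diam (chain (n + Δ + 1)) := by ring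
        _ = C₃ ^ (Δ + 1) * diam (chain (n + (Δ + 1))) := by ring_nf


lemma expP1 {a b L u : ℝ} (ha : 1 < a) (hb0 : 0 < b) (hb1 : b < 1) (hL : 0 < L)
    (hu : 0 < u) (q : ℕ) (h : L ≤ u * a ^ q) :
    b ^ q ≤ (u / L) ^ (Real.log (1 / b) / Real.log a) := by
  have hla : 0 < Real.log a := Real.log_pos ha
  have hlb : 0 < Real.log (1 / b) := by
    rw [one_div, Real.log_inv]; linarith [Real.log_neg hb0 hb1]
  set σ := Real.log (1 / b) / Real.log a with hσdef
  have hσ : 0 < σ := div_pos hlb hla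
  have ha0 : (0:ℝ) < a := lt_trans one_pos ha
  have key : b ^ q = (a ^ q : ℝ) ^ (-σ) := by
    rw [Real.rpow_def_of_pos (pow_pos ha0 q), Real.log_pow]
    have h2 : (q : ℝ) * Real.log a * (-σ) = (q : ℝ) * Real.log b := by
      rw [hσdef, one_div, Real.log_inv]
      field_simp
    rw [h2, Real.exp_nat_mul, Real.exp_log hb0]
  have hq : L / u ≤ a ^ q := (div_le_iff₀ hu).mpr (by linarith [mul_comm u ((a:ℝ)^q)])
  have hLu : (0:ℝ) < L / u := div_pos hL hu
  calc b ^ q = (a ^ q : ℝ) ^ (-σ) := key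
    _ ≤ (L / u) ^ (-σ) := by
        rw [Real.rpow_neg (pow_pos ha0 q).le, Real.rpow_neg hLu.le]
        exact inv_anti₀ (Real.rpow_pos_of_pos hLu σ)
          (Real.rpow_le_rpow hLu.le hq hσ.le)
    _ = (u / L) ^ σ := by
        rw [Real.rpow_neg hLu.le, ← Real.inv_rpow hLu.le, inv_div]

lemma expP2 {a c R : ℝ} (ha : 1 < a) (hc : 1 ≤ c) (q : ℕ) (hR : a ^ q ≤ R) :
    c ^ q ≤ R ^ (max (Real.log c / Real.log a) 1) := by
  have ha0 : (0:ℝ) < a := lt_trans one_pos ha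
  have hR1 : (1:ℝ) ≤ R := le_trans (one_le_pow₀ ha.le) hR
  have hγ₀ : 0 ≤ Real.log c / Real.log a :=
    div_nonneg (Real.log_nonneg hc) (Real.log_pos ha).le
  have key : (c : ℝ) ^ q = (a ^ q : ℝ) ^ (Real.log c / Real.log a) := by
    rw [Real.rpow_def_of_pos (pow_pos ha0 q), Real.log_pow]
    have h2 : (q : ℝ) * Real.log a * (Real.log c / Real.log a) = (q : ℝ) * Real.log c := by
      have hla : Real.log a ≠ 0 := (Real.log_pos ha).ne'
      field_simp
    rw [h2, Real.exp_nat_mul, Real.exp_log (lt_of_lt_of_le one_pos hc)]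
  calc (c:ℝ) ^ q = (a ^ q : ℝ) ^ (Real.log c / Real.log a) := key
    _ ≤ R ^ (Real.log c / Real.log a) := Real.rpow_le_rpow (pow_nonneg ha0.le q) hR hγ₀
    _ ≤ R ^ (max (Real.log c / Real.log a) 1) :=
        Real.rpow_le_rpow_of_exponent_le hR1 (le_max_left _ _)

lemma isGauge_pow_max {C σ γ : ℝ} (hC : 0 < C) (hσ : 0 < σ) (hγ : 0 < γ) :
    IsGauge (fun t => C * max (t ^ σ) (t ^ γ)) := by
  have hcont : Continuous fun t : ℝ => C * max (t ^ σ) (t ^ γ) := by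
    apply Continuous.mul continuous_const
    apply Continuous.max
    · exact continuous_iff_continuousAt.mpr fun x =>
        Real.continuousAt_rpow_const x σ (Or.inr hσ.le)
    · exact continuous_iff_continuousAt.mpr fun x =>
        Real.continuousAt_rpow_const x γ (Or.inr hγ.le)
  have h0 : C * max ((0:ℝ) ^ σ) ((0:ℝ) ^ γ) = 0 := by
    rw [Real.zero_rpow hσ.ne', Real.zero_rpow hγ.ne', max_self, mul_zero]
  have hmono : StrictMonoOn (fun t : ℝ => C * max (t ^ σ) (t ^ γ)) (Set.Ici 0) := by
    intro a ha b hb hab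
    have h1 : a ^ σ < b ^ σ := Real.rpow_lt_rpow ha hab hσ
    have h2 : a ^ γ < b ^ γ := Real.rpow_lt_rpow ha hab hγ
    have : max (a ^ σ) (a ^ γ) < max (b ^ σ) (b ^ γ) := max_lt_max h1 h2
    exact mul_lt_mul_of_pos_left this hC
  refine ⟨h0, hmono, hcont.continuousOn, ?_⟩
  intro s hs
  set M : ℝ := max 1 ((s / C) ^ (1/σ)) with hM
  have hM0 : (0:ℝ) ≤ M := le_trans zero_le_one (le_max_left _ _)
  have hsC : 0 ≤ s / C := div_nonneg hs hC.le
  have hMb : s ≤ C * max (M ^ σ) (M ^ γ) := by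
    have h1 : (s / C) ≤ M ^ σ := by
      calc s / C = ((s / C) ^ (1/σ)) ^ σ := by
            rw [← Real.rpow_mul hsC, one_div, inv_mul_cancel₀ hσ.ne', Real.rpow_one]
        _ ≤ M ^ σ := Real.rpow_le_rpow (Real.rpow_nonneg hsC _) (le_max_right _ _) hσ.le
    calc s = C * (s / C) := by field_simp
      _ ≤ C * M ^ σ := by
          exact mul_le_mul_of_nonneg_left h1 hC.le
      _ ≤ C * max (M ^ σ) (M ^ γ) := by
          exact mul_le_mul_of_nonneg_left (le_max_left _ _) hC.le
  have := intermediate_value_Icc hM0 hcont.continuousOn (a := 0) (b := M)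
  have hmem : s ∈ Icc (C * max ((0:ℝ) ^ σ) ((0:ℝ) ^ γ)) (C * max (M ^ σ) (M ^ γ)) := by
    rw [h0]; exact ⟨hs, hMb⟩
  obtain ⟨t, ht, hts⟩ := this hmem
  exact ⟨t, ht.1, hts⟩

lemma qva_image_of_qs {S T : Type*} [MetricSpace S] [MetricSpace T]
    (hbS : IsBounded (univ : Set S)) (hbT : IsBounded (univ : Set T))
    {F : S → T} (hF : Function.Bijective F)
    {𝒳 : ℕ → Set (Set S)} (hQVA : IsQVA 𝒳)
    {η : ℝ → ℝ} (hη : IsGauge η)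
    (hqs : ∀ t : ℝ, 0 < t → ∀ x y z : S, dist x y ≤ t * dist x z →
      dist (F x) (F y) ≤ η t * dist (F x) (F z)) :
    IsQVA (fun n => (fun X => F '' X) '' 𝒳 n) := by
  obtain ⟨hfin, hcov, h0, ⟨C₁, hC₁, hi⟩, ⟨c₂, hc₂, hii⟩, ⟨C₃, hC₃, hiii⟩,
    ⟨k₀, hk₀, lam, hlam0, hlam1, hiv⟩⟩ := hQVA
  obtain ⟨hη0, hηmono, hηcont, hηsurj⟩ := hη
  have hηpos : ∀ u : ℝ, 0 < u → 0 < η u := fun u hu => by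
    have := hηmono (Set.mem_Ici.mpr (le_refl 0)) (Set.mem_Ici.mpr hu.le) hu
    rwa [hη0] at this
  have himg_inter : ∀ (A B : Set S), (F '' A) ∩ (F '' B) = F '' (A ∩ B) :=
    fun A B => (Set.image_inter hF.injective).symm
  refine ⟨fun n => (hfin n).image _, ?_, ?_, ?_, ?_, ?_, ?_⟩
  · intro n
    rw [Set.sUnion_image, ← Set.image_iUnion₂, ← Set.sUnion_eq_biUnion, hcov n,
      Set.image_univ, hF.surjective.range_eq]
  · simp only [h0, Set.image_singleton, Set.image_univ, hF.surjective.range_eq]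
  · refine ⟨max 1 (2 * η (4 * C₁)), le_max_left _ _, ?_⟩
    rintro n _ ⟨X, hX, rfl⟩ _ ⟨Y, hY, rfl⟩ hne
    rw [himg_inter] at hne
    obtain ⟨_, ⟨p, hp, rfl⟩⟩ := hne
    have hd := hi n X hX Y hY ⟨p, hp⟩
    have hq := qs_diam hbS hbT hη0 hηmono hqs hp.1 hp.2
      (show (0:ℝ) < C₁ by linarith) hd
    calc diam (F '' X) ≤ 2 * η (4 * C₁) * diam (F '' Y) := hq
      _ ≤ max 1 (2 * η (4 * C₁)) * diam (F '' Y) :=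
          mul_le_mul_of_nonneg_right (le_max_right _ _) diam_nonneg
  · have hηc : 0 < η (1 / c₂) := hηpos _ (by positivity)
    refine ⟨(2 * η (1 / c₂))⁻¹, by positivity, ?_⟩
    rintro n _ ⟨X, hX, rfl⟩ _ ⟨Y, hY, rfl⟩ hemp
    have hXY : X ∩ Y = ∅ := by
      by_contra hne
      rw [← ne_eq, ← Set.nonempty_iff_ne_empty] at hne
      obtain ⟨p, hp⟩ := hne
      have : F p ∈ (F '' X) ∩ (F '' Y) :=
        ⟨mem_image_of_mem _ hp.1, mem_image_of_mem _ hp.2⟩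
      rw [hemp] at this
      exact this
    rintro _ ⟨x, hx, rfl⟩ _ ⟨y, hy, rfl⟩
    have hkey : ∀ a ∈ X, dist (F x) (F a) ≤ η (1 / c₂) * dist (F x) (F y) := by
      intro a ha
      apply hqs _ (by positivity)
      have h1 : c₂ * diam X ≤ dist x y := hii n X hX Y hY hXY x hx y hy
      have h2 : dist x a ≤ diam X :=
        dist_le_diam_of_mem (hbS.subset (subset_univ _)) hx ha
      have h4 : diam X ≤ 1 / c₂ * dist x y := by
        rw [one_div, inv_mul_eq_div, le_div_iff₀ hc₂]
        linarith [mul_comm c₂ (diam X)]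
      linarith
    have hd : diam (F '' X) ≤ 2 * η (1 / c₂) * dist (F x) (F y) := by
      apply diam_le_of_forall_dist_le (by positivity)
      rintro _ ⟨a, ha, rfl⟩ _ ⟨b, hb, rfl⟩
      have h1 := hkey a ha
      have h2 := hkey b hb
      have h3 := dist_triangle (F a) (F x) (F b)
      rw [dist_comm (F a) (F x)] at h3
      linarith
    rw [inv_mul_le_iff₀ (by positivity)]
    exact hd
  · refine ⟨max 1 (2 * η (4 * C₃)), le_max_left _ _, ?_⟩
    rintro n _ ⟨X, hX, rfl⟩ _ ⟨Y, hY, rfl⟩ hne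
    rw [himg_inter] at hne
    obtain ⟨_, ⟨p, hp, rfl⟩⟩ := hne
    have hd := hiii n X hX Y hY ⟨p, hp⟩
    have hC₃0 : (0:ℝ) < C₃ := by linarith
    constructor
    · have hq := qs_diam hbS hbT hη0 hηmono hqs hp.1 hp.2 hC₃0 hd.1
      calc diam (F '' X) ≤ 2 * η (4 * C₃) * diam (F '' Y) := hq
        _ ≤ max 1 (2 * η (4 * C₃)) * diam (F '' Y) :=
            mul_le_mul_of_nonneg_right (le_max_right _ _) diam_nonneg
    · have hq := qs_diam hbS hbT hη0 hηmono hqs hp.2 hp.1 hC₃0 hd.2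
      calc diam (F '' Y) ≤ 2 * η (4 * C₃) * diam (F '' X) := hq
        _ ≤ max 1 (2 * η (4 * C₃)) * diam (F '' X) :=
            mul_le_mul_of_nonneg_right (le_max_right _ _) diam_nonneg
  · obtain ⟨t₀, ht₀0, ht₀⟩ := hηsurj (1/8) (by norm_num)
    have ht₀pos : 0 < t₀ := by
      rcases lt_or_eq_of_le ht₀0 with h | h
      · exact h
      · exfalso
        rw [← h, hη0] at ht₀
        norm_num at ht₀
    obtain ⟨j, hj⟩ := exists_pow_lt_of_lt_one (show (0:ℝ) < t₀/4 by positivity) hlam1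
    set m := max j 1 with hmdef
    have hm1 : 1 ≤ m := le_max_right _ _
    have hlm : lam ^ m ≤ lam ^ j :=
      pow_le_pow_of_le_one hlam0.le hlam1.le (le_max_left _ _)
    have hηsmall : η (4 * lam ^ m) ≤ 1/8 := by
      rw [← ht₀]
      exact hηmono.monotoneOn (Set.mem_Ici.mpr (by positivity))
        (Set.mem_Ici.mpr ht₀0) (by nlinarith)
    refine ⟨m * k₀, Nat.mul_pos hm1 hk₀, 1/2, by norm_num, by norm_num, ?_⟩
    rintro n _ ⟨X, hX, rfl⟩ _ ⟨Y, hY, rfl⟩ hne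
    rw [himg_inter] at hne
    obtain ⟨_, ⟨p, hp, rfl⟩⟩ := hne
    obtain ⟨m', hm'⟩ : ∃ m', m = m' + 1 := ⟨m - 1, by omega⟩
    rw [hm'] at hY
    have hdec : diam Y ≤ lam ^ (m' + 1) * diam X :=
      chain_decay hcov hlam0.le hiv p n X hX hp.1 m' Y hY hp.2
    have hq := qs_diam hbS hbT hη0 hηmono hqs hp.2 hp.1
      (show (0:ℝ) < lam ^ (m' + 1) by positivity) hdec
    have hsm : η (4 * lam ^ (m' + 1)) ≤ 1/8 := by rw [← hm']; exact hηsmall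
    calc diam (F '' Y) ≤ 2 * η (4 * lam ^ (m' + 1)) * diam (F '' X) := hq
      _ ≤ 1/2 * diam (F '' X) :=
          mul_le_mul_of_nonneg_right (by linarith) diam_nonneg
set_option maxHeartbeats 1000000 in
lemma qs_of_qva_image {S T : Type*} [MetricSpace S] [MetricSpace T]
    (hbS : IsBounded (univ : Set S)) (hbT : IsBounded (univ : Set T))
    {F : S → T} (hF : Function.Bijective F)
    {𝒳 : ℕ → Set (Set S)} (hQVA : IsQVA 𝒳)
    (hImg : IsQVA (fun n => (fun X => F '' X) '' 𝒳 n)) :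
    ∃ η : ℝ → ℝ, IsGauge η ∧ ∀ t : ℝ, 0 < t → ∀ x y z : S,
      dist x y ≤ t * dist x z → dist (F x) (F y) ≤ η t * dist (F x) (F z) := by
  classical
  obtain ⟨hfin, hcov, h0, ⟨C₁, hC₁, hi⟩, ⟨c₂, hc₂, hii⟩, ⟨C₃, hC₃, hiii⟩,
    ⟨k₀, hk₀, lam, hlam0, hlam1, hiv⟩⟩ := hQVA
  obtain ⟨hfin', hcov', h0', ⟨D₁, hD₁, hi'⟩, ⟨d₂, hd₂, hii'⟩, ⟨D₃, hD₃, hiii'⟩,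
    ⟨l₀, hl₀, mu, hmu0, hmu1, hiv'⟩⟩ := hImg
  -- chains
  have hch : ∀ (n : ℕ) (x : S), ∃ X, X ∈ 𝒳 n ∧ x ∈ X := by
    intro n x
    have hx : x ∈ ⋃₀ 𝒳 n := by rw [hcov n]; trivial
    obtain ⟨X, hX, hxX⟩ := mem_sUnion.mp hx
    exact ⟨X, hX, hxX⟩
  choose Xc hXmem hXpt using hch
  have hX0 : ∀ x, Xc 0 x = univ := fun x => by
    have h := hXmem 0 x; rw [h0] at h; simpa using h
  -- constants
  set C₃' : ℝ := max C₃ 2 with hC₃'def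
  have hC₃'2 : (2:ℝ) ≤ C₃' := le_max_right _ _
  have hC₃'le : C₃ ≤ C₃' := le_max_left _ _
  set a₁ : ℝ := C₃' ^ l₀ with ha₁def
  have ha₁ : 1 < a₁ := one_lt_pow₀ (by linarith) hl₀.ne'
  set σ : ℝ := Real.log (1 / mu) / Real.log a₁ with hσdef
  have hσ : 0 < σ := by
    apply div_pos _ (Real.log_pos ha₁)
    rw [one_div, Real.log_inv]
    linarith [Real.log_neg hmu0 hmu1]
  set a₂ : ℝ := 1 / lam with ha₂def
  have ha₂ : 1 < a₂ := by rw [ha₂def, lt_div_iff₀ hlam0]; linarith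
  set γ : ℝ := max (Real.log (D₃ ^ k₀) / Real.log a₂) 1 with hγdef
  have hγ : 0 < γ := lt_of_lt_of_le one_pos (le_max_right _ _)
  have hD₃0 : (0:ℝ) < D₃ := by linarith
  have hC₃0 : (0:ℝ) < C₃ := by linarith
  set B₁ : ℝ := (1 + C₁) * a₁ / c₂ with hB₁def
  have hB₁ : 0 < B₁ := by positivity
  set B₂ : ℝ := (1 + C₁) * C₃ ^ (k₀ + 1) / c₂ with hB₂def
  have hB₂ : 0 < B₂ := by positivity
  set A₁ : ℝ := D₃ ^ l₀ * B₁ ^ σ with hA₁def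
  have hA₁ : 0 < A₁ := by positivity
  set A₂ : ℝ := D₃ ^ k₀ * B₂ ^ γ with hA₂def
  have hA₂ : 0 < A₂ := by positivity
  set Cη : ℝ := ((1 + D₁) * D₃ / d₂) * max A₁ A₂ with hCηdef
  have hCη : 0 < Cη := by
    apply mul_pos (by positivity) (lt_max_of_lt_left hA₁)
  refine ⟨fun t => Cη * max (t ^ σ) (t ^ γ), isGauge_pow_max hCη hσ hγ, ?_⟩
  intro t ht x y z hxyz
  by_cases hxy : x = y
  · subst hxy
    rw [dist_self]
    have : 0 < t ^ σ := Real.rpow_pos_of_pos ht σ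
    positivity
  have hdy : 0 < dist x y := dist_pos.mpr hxy
  by_cases hxz : x = z
  · exfalso
    subst hxz
    rw [dist_self, mul_zero] at hxyz
    linarith
  have hdz : 0 < dist x z := dist_pos.mpr hxz
  have hbX : ∀ A : Set S, IsBounded A := fun A => hbS.subset (subset_univ _)
  have hbY : ∀ A : Set T, IsBounded A := fun A => hbT.subset (subset_univ _)
  -- key lemma
  have key : ∀ w : S, x ≠ w → ∃ m : ℕ,
      c₂ * diam (Xc m x) ≤ dist x w ∧
      dist x w ≤ (1 + C₁) * C₃ * diam (Xc m x) ∧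
      d₂ * diam (F '' Xc m x) ≤ dist (F x) (F w) ∧
      dist (F x) (F w) ≤ (1 + D₁) * D₃ * diam (F '' Xc m x) := by
    intro w hxw
    have hdw : 0 < dist x w := dist_pos.mpr hxw
    have hex : ∃ n, Xc n x ∩ Xc n w = ∅ := by
      set Dμ : ℝ := diam (univ : Set S) with hDμ
      have hDμ0 : 0 ≤ Dμ := diam_nonneg
      obtain ⟨j, hj⟩ := exists_pow_lt_of_lt_one
        (show (0:ℝ) < dist x w / ((1 + C₁) * (Dμ + 1)) by positivity) hlam1
      refine ⟨(j + 1) * k₀, ?_⟩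
      by_contra hne
      rw [← ne_eq, ← Set.nonempty_iff_ne_empty] at hne
      obtain ⟨p, hpx, hpw⟩ := hne
      have hd1 : diam (Xc ((j + 1) * k₀) x) ≤ lam ^ (j + 1) * Dμ := by
        have h := chain_decay hcov hlam0.le hiv x 0 (Xc 0 x) (hXmem 0 x) (hXpt 0 x)
          j (Xc (0 + (j + 1) * k₀) x) (hXmem _ x) (hXpt _ x)
        rw [hX0 x] at h
        simpa using h
      have hd2 : diam (Xc ((j + 1) * k₀) w) ≤ C₁ * diam (Xc ((j + 1) * k₀) x) :=
        hi _ _ (hXmem _ w) _ (hXmem _ x) ⟨p, hpw, hpx⟩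
      have e1 : dist x p ≤ diam (Xc ((j + 1) * k₀) x) :=
        dist_le_diam_of_mem (hbX _) (hXpt _ x) hpx
      have e2 : dist p w ≤ diam (Xc ((j + 1) * k₀) w) :=
        dist_le_diam_of_mem (hbX _) hpw (hXpt _ w)
      have e3 := dist_triangle x p w
      have hpow1 : lam ^ (j + 1) ≤ lam ^ j :=
        pow_le_pow_of_le_one hlam0.le hlam1.le (by omega)
      have hpow0 : 0 ≤ lam ^ j := by positivity
      have hjj : lam ^ j * ((1 + C₁) * (Dμ + 1)) < dist x w :=
        (lt_div_iff₀ (by positivity)).mp hj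
      have hDμ0' : (0:ℝ) ≤ Dμ := hDμ0
      have s1 : diam (Xc ((j + 1) * k₀) x) + diam (Xc ((j + 1) * k₀) w)
          ≤ (1 + C₁) * diam (Xc ((j + 1) * k₀) x) := by linarith
      have s2 : (1 + C₁) * diam (Xc ((j + 1) * k₀) x) ≤ (1 + C₁) * (lam ^ (j + 1) * Dμ) :=
        mul_le_mul_of_nonneg_left hd1 (by linarith)
      have s3 : lam ^ (j + 1) * Dμ ≤ lam ^ j * (Dμ + 1) := by
        nlinarith [mul_le_mul_of_nonneg_right hpow1 hDμ0']
      have s4 : (1 + C₁) * (lam ^ (j + 1) * Dμ) ≤ (1 + C₁) * (lam ^ j * (Dμ + 1)) :=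
        mul_le_mul_of_nonneg_left s3 (by linarith)
      have s5 : (1 + C₁) * (lam ^ j * (Dμ + 1)) = lam ^ j * ((1 + C₁) * (Dμ + 1)) := by
        ring
      linarith
    obtain ⟨m, hdisj, hmin⟩ : ∃ m, (Xc m x ∩ Xc m w = ∅) ∧
        ∀ k, k < m → Xc k x ∩ Xc k w ≠ ∅ :=
      ⟨Nat.find hex, Nat.find_spec hex, fun k hk => Nat.find_min hex hk⟩
    have hx0mem : x ∈ Xc 0 x ∩ Xc 0 w := ⟨hXpt 0 x, by rw [hX0 w]; trivial⟩
    have hm0 : m ≠ 0 := by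
      intro h
      rw [h] at hdisj
      rw [hdisj] at hx0mem
      exact hx0mem
    obtain ⟨m', hm'⟩ : ∃ m', m = m' + 1 := ⟨m - 1, by omega⟩
    have hprev : (Xc m' x ∩ Xc m' w).Nonempty := by
      have h := hmin m' (show m' < m by omega)
      rwa [← Set.nonempty_iff_ne_empty] at h
    obtain ⟨p, hpx', hpw'⟩ := hprev
    have hmemx : Xc m x ∈ 𝒳 (m' + 1) := hm' ▸ hXmem m x
    refine ⟨m, hii m _ (hXmem m x) _ (hXmem m w) hdisj x (hXpt m x) w (hXpt m w),
      ?_, ?_, ?_⟩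
    · have e1 : dist x p ≤ diam (Xc m' x) := dist_le_diam_of_mem (hbX _) (hXpt m' x) hpx'
      have e2 : dist p w ≤ diam (Xc m' w) := dist_le_diam_of_mem (hbX _) hpw' (hXpt m' w)
      have e3 := dist_triangle x p w
      have h2 : diam (Xc m' w) ≤ C₁ * diam (Xc m' x) :=
        hi m' _ (hXmem m' w) _ (hXmem m' x) ⟨p, hpw', hpx'⟩
      have h3 : diam (Xc m' x) ≤ C₃ * diam (Xc m x) :=
        (hiii m' _ (hXmem m' x) _ hmemx ⟨x, hXpt m' x, hXpt m x⟩).1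
      nlinarith [diam_nonneg (s := Xc m x), diam_nonneg (s := Xc m' x)]
    · have hdisjT : (F '' Xc m x) ∩ (F '' Xc m w) = ∅ := by
        rw [← Set.image_inter hF.injective, hdisj, Set.image_empty]
      exact hii' m _ (Set.mem_image_of_mem _ (hXmem m x)) _
        (Set.mem_image_of_mem _ (hXmem m w)) hdisjT
        (F x) (Set.mem_image_of_mem F (hXpt m x)) (F w) (Set.mem_image_of_mem F (hXpt m w))
    · have e1 : dist (F x) (F p) ≤ diam (F '' Xc m' x) :=
        dist_le_diam_of_mem (hbY _) (Set.mem_image_of_mem F (hXpt m' x))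
          (Set.mem_image_of_mem F hpx')
      have e2 : dist (F p) (F w) ≤ diam (F '' Xc m' w) :=
        dist_le_diam_of_mem (hbY _) (Set.mem_image_of_mem F hpw')
          (Set.mem_image_of_mem F (hXpt m' w))
      have e3 := dist_triangle (F x) (F p) (F w)
      have h2 : diam (F '' Xc m' w) ≤ D₁ * diam (F '' Xc m' x) :=
        hi' m' _ (Set.mem_image_of_mem _ (hXmem m' w)) _
          (Set.mem_image_of_mem _ (hXmem m' x))
          ⟨F p, Set.mem_image_of_mem F hpw', Set.mem_image_of_mem F hpx'⟩
      have h3 : diam (F '' Xc m' x) ≤ D₃ * diam (F '' Xc m x) :=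
        (hiii' m' _ (Set.mem_image_of_mem _ (hXmem m' x)) _
          (Set.mem_image_of_mem _ hmemx)
          ⟨F x, Set.mem_image_of_mem F (hXpt m' x), Set.mem_image_of_mem F (hXpt m x)⟩).1
      nlinarith [diam_nonneg (s := F '' Xc m x), diam_nonneg (s := F '' Xc m' x)]
  -- comparability and decay along the chain through x
  have compS : ∀ (n Δ : ℕ), diam (Xc (n + Δ) x) ≤ C₃ ^ Δ * diam (Xc n x) ∧
      diam (Xc n x) ≤ C₃ ^ Δ * diam (Xc (n + Δ) x) :=
    fun n Δ => chain_comp hC₃ hiii (fun n => Xc n x) (fun n => hXmem n x) x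
      (fun n => hXpt n x) n Δ
  have compT : ∀ (n Δ : ℕ), diam (F '' Xc (n + Δ) x) ≤ D₃ ^ Δ * diam (F '' Xc n x) ∧
      diam (F '' Xc n x) ≤ D₃ ^ Δ * diam (F '' Xc (n + Δ) x) :=
    fun n Δ => chain_comp hD₃ hiii' (fun n => F '' Xc n x)
      (fun n => Set.mem_image_of_mem _ (hXmem n x)) (F x)
      (fun n => Set.mem_image_of_mem F (hXpt n x)) n Δ
  have decS : ∀ (n q : ℕ), diam (Xc (n + (q + 1) * k₀) x) ≤ lam ^ (q + 1) * diam (Xc n x) :=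
    fun n q => chain_decay hcov hlam0.le hiv x n _ (hXmem n x) (hXpt n x) q _
      (hXmem _ x) (hXpt _ x)
  have decT : ∀ (n q : ℕ),
      diam (F '' Xc (n + (q + 1) * l₀) x) ≤ mu ^ (q + 1) * diam (F '' Xc n x) :=
    fun n q => chain_decay hcov' hmu0.le hiv' (F x) n _
      (Set.mem_image_of_mem _ (hXmem n x)) (Set.mem_image_of_mem F (hXpt n x)) q _
      (Set.mem_image_of_mem _ (hXmem _ x)) (Set.mem_image_of_mem F (hXpt _ x))
  obtain ⟨m₁, hkl1, hku1, hkl1', hku1'⟩ := key y hxy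
  obtain ⟨m₂, hkl2, hku2, hkl2', hku2'⟩ := key z hxz
  have hD1pos : 0 < diam (Xc m₁ x) := by
    by_contra h
    push_neg at h
    have h2 : (1 + C₁) * C₃ * diam (Xc m₁ x) ≤ (1 + C₁) * C₃ * 0 :=
      mul_le_mul_of_nonneg_left h (by positivity)
    rw [mul_zero] at h2
    linarith
  have hFz : 0 < dist (F x) (F z) := dist_pos.mpr fun h => hxz (hF.injective h)
  have hE2pos : 0 < diam (F '' Xc m₂ x) := by
    by_contra h
    push_neg at h
    have h2 : (1 + D₁) * D₃ * diam (F '' Xc m₂ x) ≤ (1 + D₁) * D₃ * 0 :=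
      mul_le_mul_of_nonneg_left h (by positivity)
    rw [mul_zero] at h2
    linarith
  have hcore : c₂ * diam (Xc m₁ x) ≤ t * ((1 + C₁) * C₃ * diam (Xc m₂ x)) := by
    calc c₂ * diam (Xc m₁ x) ≤ dist x y := hkl1
      _ ≤ t * dist x z := hxyz
      _ ≤ t * ((1 + C₁) * C₃ * diam (Xc m₂ x)) := mul_le_mul_of_nonneg_left hku2 ht.le
  suffices hE : diam (F '' Xc m₁ x) ≤
      (max A₁ A₂ * max (t ^ σ) (t ^ γ)) * diam (F '' Xc m₂ x) by
    have hEz : diam (F '' Xc m₂ x) ≤ dist (F x) (F z) / d₂ := by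
      rw [le_div_iff₀ hd₂]
      linarith [mul_comm (diam (F '' Xc m₂ x)) d₂]
    have hmaxt : 0 < max (t ^ σ) (t ^ γ) :=
      lt_max_of_lt_left (Real.rpow_pos_of_pos ht σ)
    have hmaxA : 0 < max A₁ A₂ := lt_max_of_lt_left hA₁
    calc dist (F x) (F y) ≤ (1 + D₁) * D₃ * diam (F '' Xc m₁ x) := hku1'
      _ ≤ (1 + D₁) * D₃ * ((max A₁ A₂ * max (t ^ σ) (t ^ γ)) * diam (F '' Xc m₂ x)) := by
          apply mul_le_mul_of_nonneg_left hE (by positivity)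
      _ ≤ (1 + D₁) * D₃ * ((max A₁ A₂ * max (t ^ σ) (t ^ γ)) *
            (dist (F x) (F z) / d₂)) := by
          apply mul_le_mul_of_nonneg_left _ (by positivity)
          exact mul_le_mul_of_nonneg_left hEz (by positivity)
      _ = Cη * max (t ^ σ) (t ^ γ) * dist (F x) (F z) := by
          rw [hCηdef]; field_simp
  rcases le_or_gt m₂ m₁ with hcase | hcase
  · -- m₂ ≤ m₁
    obtain ⟨Δ, hΔ⟩ : ∃ Δ, m₁ = m₂ + Δ := ⟨m₁ - m₂, by omega⟩
    obtain ⟨q, r, hqr, hr⟩ : ∃ q r, Δ = q * l₀ + r ∧ r < l₀ :=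
      ⟨Δ / l₀, Δ % l₀, (Nat.div_add_mod' Δ l₀).symm, Nat.mod_lt _ hl₀⟩
    have hS1 : diam (Xc m₂ x) ≤ C₃ ^ Δ * diam (Xc m₁ x) := by
      have h := (compS m₂ Δ).2
      rwa [← hΔ] at h
    have hS3 : c₂ ≤ t * ((1 + C₁) * C₃ ^ (Δ + 1)) := by
      have h5 : c₂ * diam (Xc m₁ x) ≤ t * ((1 + C₁) * C₃ ^ (Δ + 1)) * diam (Xc m₁ x) := by
        calc c₂ * diam (Xc m₁ x) ≤ t * ((1 + C₁) * C₃ * diam (Xc m₂ x)) := hcore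
          _ ≤ t * ((1 + C₁) * C₃ * (C₃ ^ Δ * diam (Xc m₁ x))) := by
              apply mul_le_mul_of_nonneg_left _ ht.le
              apply mul_le_mul_of_nonneg_left hS1 (by positivity)
          _ = t * ((1 + C₁) * C₃ ^ (Δ + 1)) * diam (Xc m₁ x) := by ring
      exact le_of_mul_le_mul_right h5 hD1pos
    have hΔ1 : Δ + 1 ≤ (q + 1) * l₀ := by
      calc Δ + 1 = q * l₀ + r + 1 := by rw [← hqr]
        _ ≤ q * l₀ + l₀ := by omega
        _ = (q + 1) * l₀ := by ring
    have hS4 : c₂ ≤ t * ((1 + C₁) * a₁) * a₁ ^ q := by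
      have e1 : C₃ ^ (Δ + 1) ≤ C₃' ^ (Δ + 1) := pow_le_pow_left₀ hC₃0.le hC₃'le _
      have e2 : C₃' ^ (Δ + 1) ≤ C₃' ^ ((q + 1) * l₀) :=
        pow_le_pow_right₀ (by linarith) hΔ1
      have e3 : C₃' ^ ((q + 1) * l₀) = a₁ * a₁ ^ q := by
        rw [mul_comm (q + 1) l₀, pow_mul, ← ha₁def, pow_succ, mul_comm]
      have f1 : t * ((1 + C₁) * C₃ ^ (Δ + 1)) ≤ t * ((1 + C₁) * (a₁ * a₁ ^ q)) := by
        apply mul_le_mul_of_nonneg_left _ ht.le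
        apply mul_le_mul_of_nonneg_left _ (by linarith)
        calc C₃ ^ (Δ + 1) ≤ C₃' ^ (Δ + 1) := e1
          _ ≤ C₃' ^ ((q + 1) * l₀) := e2
          _ = a₁ * a₁ ^ q := e3
      calc c₂ ≤ t * ((1 + C₁) * C₃ ^ (Δ + 1)) := hS3
        _ ≤ t * ((1 + C₁) * (a₁ * a₁ ^ q)) := f1
        _ = t * ((1 + C₁) * a₁) * a₁ ^ q := by ring
    have hP1 : mu ^ q ≤ (t * B₁) ^ σ := by
      have h := expP1 ha₁ hmu0 hmu1 hc₂
        (show 0 < t * ((1 + C₁) * a₁) by positivity) q hS4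
      have e : t * ((1 + C₁) * a₁) / c₂ = t * B₁ := by rw [hB₁def]; ring
      rwa [e, ← hσdef] at h
    have hT1 : diam (F '' Xc m₁ x) ≤ D₃ ^ r * diam (F '' Xc (m₂ + q * l₀) x) := by
      have h := (compT (m₂ + q * l₀) r).1
      rwa [show m₂ + q * l₀ + r = m₁ by rw [hΔ, hqr]; ring] at h
    have hT2 : diam (F '' Xc (m₂ + q * l₀) x) ≤ mu ^ q * diam (F '' Xc m₂ x) := by
      rcases Nat.eq_zero_or_pos q with hq0 | hq0
      · subst hq0; simp
      · obtain ⟨q', rfl⟩ : ∃ q', q = q' + 1 := ⟨q - 1, by omega⟩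
        exact decT m₂ q'
    have hT3 : D₃ ^ r ≤ D₃ ^ l₀ := pow_le_pow_right₀ hD₃ hr.le
    have hrp : (t * B₁) ^ σ = t ^ σ * B₁ ^ σ := Real.mul_rpow ht.le hB₁.le
    calc diam (F '' Xc m₁ x) ≤ D₃ ^ r * (mu ^ q * diam (F '' Xc m₂ x)) :=
          le_trans hT1 (mul_le_mul_of_nonneg_left hT2 (by positivity))
      _ ≤ D₃ ^ l₀ * ((t * B₁) ^ σ * diam (F '' Xc m₂ x)) := by
          apply mul_le_mul hT3 (mul_le_mul_of_nonneg_right hP1 diam_nonneg)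
            (by positivity) (by positivity)
      _ = (A₁ * t ^ σ) * diam (F '' Xc m₂ x) := by rw [hrp, hA₁def]; ring
      _ ≤ (max A₁ A₂ * max (t ^ σ) (t ^ γ)) * diam (F '' Xc m₂ x) := by
          apply mul_le_mul_of_nonneg_right _ diam_nonneg
          apply mul_le_mul (le_max_left _ _) (le_max_left _ _)
            (by positivity) (le_of_lt (lt_max_of_lt_left hA₁))
  · -- m₁ < m₂
    obtain ⟨Δ, hΔ⟩ : ∃ Δ, m₂ = m₁ + Δ := ⟨m₂ - m₁, by omega⟩
    obtain ⟨q, r, hqr, hr⟩ : ∃ q r, Δ = q * k₀ + r ∧ r < k₀ :=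
      ⟨Δ / k₀, Δ % k₀, (Nat.div_add_mod' Δ k₀).symm, Nat.mod_lt _ hk₀⟩
    have hS1 : diam (Xc m₂ x) ≤ C₃ ^ r * diam (Xc (m₁ + q * k₀) x) := by
      have h := (compS (m₁ + q * k₀) r).1
      rwa [show m₁ + q * k₀ + r = m₂ by rw [hΔ, hqr]; ring] at h
    have hS2 : diam (Xc (m₁ + q * k₀) x) ≤ lam ^ q * diam (Xc m₁ x) := by
      rcases Nat.eq_zero_or_pos q with hq0 | hq0
      · subst hq0; simp
      · obtain ⟨q', rfl⟩ : ∃ q', q = q' + 1 := ⟨q - 1, by omega⟩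
        exact decS m₁ q'
    have hS3 : C₃ ^ r ≤ C₃ ^ k₀ := pow_le_pow_right₀ hC₃ hr.le
    have hS5 : c₂ ≤ t * (1 + C₁) * C₃ ^ (k₀ + 1) * lam ^ q := by
      have h5 : c₂ * diam (Xc m₁ x) ≤
          t * (1 + C₁) * C₃ ^ (k₀ + 1) * lam ^ q * diam (Xc m₁ x) := by
        calc c₂ * diam (Xc m₁ x) ≤ t * ((1 + C₁) * C₃ * diam (Xc m₂ x)) := hcore
          _ ≤ t * ((1 + C₁) * C₃ * (C₃ ^ r * (lam ^ q * diam (Xc m₁ x)))) := by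
              apply mul_le_mul_of_nonneg_left _ ht.le
              apply mul_le_mul_of_nonneg_left _ (by positivity)
              calc diam (Xc m₂ x) ≤ C₃ ^ r * diam (Xc (m₁ + q * k₀) x) := hS1
                _ ≤ C₃ ^ r * (lam ^ q * diam (Xc m₁ x)) :=
                    mul_le_mul_of_nonneg_left hS2 (by positivity)
          _ ≤ t * ((1 + C₁) * C₃ * (C₃ ^ k₀ * (lam ^ q * diam (Xc m₁ x)))) := by
              apply mul_le_mul_of_nonneg_left _ ht.le
              apply mul_le_mul_of_nonneg_left _ (by positivity)
              apply mul_le_mul_of_nonneg_right hS3 (by positivity)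
          _ = t * (1 + C₁) * C₃ ^ (k₀ + 1) * lam ^ q * diam (Xc m₁ x) := by ring
      exact le_of_mul_le_mul_right h5 hD1pos
    have hP2 : a₂ ^ q ≤ t * B₂ := by
      have hlq : (0:ℝ) < lam ^ q := by positivity
      rw [ha₂def, div_pow, one_pow, div_le_iff₀ hlq, hB₂def]
      calc (1:ℝ) ≤ t * (1 + C₁) * C₃ ^ (k₀ + 1) * lam ^ q / c₂ := by
            rw [le_div_iff₀ hc₂]; linarith
        _ = t * ((1 + C₁) * C₃ ^ (k₀ + 1) / c₂) * lam ^ q := by field_simp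
    have hP2' : (D₃ ^ k₀) ^ q ≤ (t * B₂) ^ γ := by
      have h := expP2 (c := D₃ ^ k₀) ha₂ (one_le_pow₀ hD₃) q hP2
      rwa [← hγdef] at h
    have hT1 : diam (F '' Xc m₁ x) ≤ D₃ ^ Δ * diam (F '' Xc m₂ x) := by
      have h := (compT m₁ Δ).2
      rwa [← hΔ] at h
    have hT2 : (D₃:ℝ) ^ Δ ≤ D₃ ^ k₀ * (D₃ ^ k₀) ^ q := by
      have e1 : (D₃:ℝ) ^ Δ ≤ D₃ ^ ((q + 1) * k₀) := by
        apply pow_le_pow_right₀ hD₃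
        calc Δ = q * k₀ + r := hqr
          _ ≤ q * k₀ + k₀ := by omega
          _ = (q + 1) * k₀ := by ring
      have e2 : (D₃:ℝ) ^ ((q + 1) * k₀) = D₃ ^ k₀ * (D₃ ^ k₀) ^ q := by
        rw [mul_comm (q + 1) k₀, pow_mul, pow_succ, mul_comm]
      linarith
    have hrp : (t * B₂) ^ γ = t ^ γ * B₂ ^ γ := Real.mul_rpow ht.le hB₂.le
    calc diam (F '' Xc m₁ x) ≤ D₃ ^ Δ * diam (F '' Xc m₂ x) := hT1
      _ ≤ (D₃ ^ k₀ * (D₃ ^ k₀) ^ q) * diam (F '' Xc m₂ x) :=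
          mul_le_mul_of_nonneg_right hT2 diam_nonneg
      _ ≤ (D₃ ^ k₀ * (t * B₂) ^ γ) * diam (F '' Xc m₂ x) := by
          apply mul_le_mul_of_nonneg_right _ diam_nonneg
          exact mul_le_mul_of_nonneg_left hP2' (by positivity)
      _ = (A₂ * t ^ γ) * diam (F '' Xc m₂ x) := by rw [hrp, hA₂def]; ring
      _ ≤ (max A₁ A₂ * max (t ^ σ) (t ^ γ)) * diam (F '' Xc m₂ x) := by
          apply mul_le_mul_of_nonneg_right _ diam_nonneg
          apply mul_le_mul (le_max_right _ _) (le_max_right _ _)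
            (by positivity) (le_of_lt (lt_max_of_lt_left hA₁))

theorem stmt7 {S T : Type*} [MetricSpace S] [MetricSpace T]
    (hbS : Bornology.IsBounded (Set.univ : Set S))
    (hbT : Bornology.IsBounded (Set.univ : Set T))
    (F : S → T) (hF : Function.Bijective F)
    (𝒳 : ℕ → Set (Set S)) (hQVA : IsQVA 𝒳) :
    (∃ η : ℝ → ℝ, IsGauge η ∧ ∀ t : ℝ, 0 < t → ∀ x y z : S,
        dist x y ≤ t * dist x z → dist (F x) (F y) ≤ η t * dist (F x) (F z)) ↔
      IsQVA (fun n => (fun X => F '' X) '' 𝒳 n) := by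
  constructor
  · rintro ⟨η, hη, hqs⟩
    exact qva_image_of_qs hbS hbT hF hQVA hη hqs
  · intro hImg
    exact qs_of_qva_image hbS hbT hF hQVA hImg
end

section
/- Let T be a metric tree, S ⊂ T a subtree, p ∈ S, and B ⊂ S a branch of p in S with B ∩ ∂S = ∅ (where ∂S is the boundary of S in T). Then B is a branch of p in T. -/
/-- `A` is a (possibly degenerate) arc in `X` with endpoints `x` and `y`. -/
def IsArc {X : Type*} [TopologicalSpace X] (A : Set X) (x y : X) : Prop :=
  (x = y ∧ A = {x}) ∨
  (x ≠ y ∧ ∃ f : ℝ → X, ContinuousOn f (Set.Icc 0 1) ∧ Set.InjOn f (Set.Icc 0 1) ∧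
    f 0 = x ∧ f 1 = y ∧ A = f '' Set.Icc 0 1)

/-- A metric tree: a compact, connected, locally connected metric space with at
least two points in which any two points are joined by a unique arc. -/
structure IsMetricTree (T : Type*) [MetricSpace T] : Prop where
  compact : CompactSpace T
  conn : ConnectedSpace T
  locConn : LocallyConnectedSpace T
  nontriv : Nontrivial T
  arcUnique : ∀ x y : T, ∃! A : Set T, IsArc A x y

/-- The unique arc `[x,y]` joining `x` and `y` in the metric tree `T`. -/
noncomputable def treeArc {T : Type*} [MetricSpace T] (h : IsMetricTree T) (x y : T) :
    Set T :=
  (h.arcUnique x y).choose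

/-- `B` is a branch of `p` in the subset `S`, i.e., the closure of a connected
component of `S \ {p}`. -/
def IsBranchIn {X : Type*} [TopologicalSpace X] (S : Set X) (p : X) (B : Set X) : Prop :=
  ∃ q ∈ S \ {p}, B = closure (connectedComponentIn (S \ {p}) q)

/-- `B` is a branch of `p` in the whole space, i.e., the closure of a connected
component of the complement of `{p}`. -/
def IsBranch {X : Type*} [TopologicalSpace X] (p : X) (B : Set X) : Prop :=
  IsBranchIn Set.univ p B

/-- `p` is a branch point of the subset `S`: `p` has at least three distinct
branches in `S`. -/
def IsBranchPointIn {X : Type*} [TopologicalSpace X] (S : Set X) (p : X) : Prop :=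
  ∃ B₁ B₂ B₃ : Set X, IsBranchIn S p B₁ ∧ IsBranchIn S p B₂ ∧ IsBranchIn S p B₃ ∧
    B₁ ≠ B₂ ∧ B₁ ≠ B₃ ∧ B₂ ≠ B₃

/-- `p` is a branch point: `p` has at least three distinct branches. -/
def IsBranchPoint {X : Type*} [TopologicalSpace X] (p : X) : Prop :=
  IsBranchPointIn Set.univ p

/-- The height `H_S(p)` of `p` in the subset `S`: the diameter of the third
largest branch of `p` in `S`, realized as the supremum of
`min (diam B₁) (min (diam B₂) (diam B₃))` over triples of distinct branches. -/
noncomputable def heightIn {X : Type*} [MetricSpace X] (S : Set X) (p : X) : ℝ :=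
  sSup {r : ℝ | ∃ B₁ B₂ B₃ : Set X, IsBranchIn S p B₁ ∧ IsBranchIn S p B₂ ∧
    IsBranchIn S p B₃ ∧ B₁ ≠ B₂ ∧ B₁ ≠ B₃ ∧ B₂ ≠ B₃ ∧
    r = min (Metric.diam B₁) (min (Metric.diam B₂) (Metric.diam B₃))}

/-- The height `H_T(p)` of `p` in the whole tree. -/
noncomputable def treeHeight {X : Type*} [MetricSpace X] (p : X) : ℝ :=
  heightIn Set.univ p

/-- A subtree of a metric tree: a closed connected subset with at least
two points. -/
def IsSubtree {X : Type*} [TopologicalSpace X] (S : Set X) : Prop :=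
  IsClosed S ∧ IsConnected S ∧ S.Nontrivial

theorem stmt13 {T : Type*} [MetricSpace T] (hT : IsMetricTree T)
    (S : Set T) (hS : IsSubtree S) (p : T) (hp : p ∈ S)
    (B : Set T) (hB : IsBranchIn S p B) (hdisj : B ∩ frontier S = ∅) :
    IsBranch p B := by
  haveI := hT.locConn
  obtain ⟨q, hq, hBeq⟩ := hB
  set A := S \ {p} with hA
  set C := connectedComponentIn A q with hCdef
  have hqC : q ∈ C := mem_connectedComponentIn hq
  have hCA : C ⊆ A := connectedComponentIn_subset _ _
  have hCB : C ⊆ B := hBeq ▸ subset_closure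
  have hBS : B ⊆ S := by
    rw [hBeq]
    exact closure_minimal (hCA.trans Set.diff_subset) hS.1
  have hBint : B ⊆ interior S := by
    intro x hx
    by_contra hxi
    have hxf : x ∈ frontier S := by
      rw [hS.1.frontier_eq]; exact ⟨hBS hx, hxi⟩
    exact Set.eq_empty_iff_forall_notMem.mp hdisj x ⟨hx, hxf⟩
  set U := interior S \ {p} with hUdef
  have hUopen : IsOpen U := IsOpen.sdiff isOpen_interior isClosed_singleton
  have hUA : U ⊆ A := fun x hx => ⟨interior_subset hx.1, hx.2⟩
  have hqU : q ∈ U := ⟨hBint (hCB hqC), hq.2⟩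
  have hCU : C ⊆ U := fun x hx => ⟨hBint (hCB hx), (hCA hx).2⟩
  have hCD : C = connectedComponentIn U q := by
    apply Set.Subset.antisymm
    · exact (isPreconnected_connectedComponentIn).subset_connectedComponentIn hqC hCU
    · exact (isPreconnected_connectedComponentIn).subset_connectedComponentIn
        (mem_connectedComponentIn hqU)
        ((connectedComponentIn_subset U q).trans hUA)
  have hCopen : IsOpen C := hCD ▸ hUopen.connectedComponentIn
  have hkey : B ∩ {p}ᶜ ⊆ C := by
    rintro x ⟨hxB, hxp⟩
    have hxU : x ∈ U := ⟨hBint hxB, hxp⟩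
    have hD'open : IsOpen (connectedComponentIn U x) := hUopen.connectedComponentIn
    have hxD' : x ∈ connectedComponentIn U x := mem_connectedComponentIn hxU
    have hxcl : x ∈ closure C := hBeq ▸ hxB
    obtain ⟨y, hyD', hyC⟩ := mem_closure_iff.mp hxcl _ hD'open hxD'
    rw [hCD] at hyC ⊢
    rw [connectedComponentIn_eq hyC, ← connectedComponentIn_eq hyD']
    exact hxD'
  set E := connectedComponentIn (Set.univ \ {p}) q with hEdef
  have hCE : C ⊆ E :=
    (isPreconnected_connectedComponentIn).subset_connectedComponentIn hqC
      (fun x hx => ⟨trivial, (hCA hx).2⟩)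
  have hEC : E ⊆ C := by
    have hpre : IsPreconnected E := isPreconnected_connectedComponentIn
    have hEp : ∀ x ∈ E, x ∈ ({p}ᶜ : Set T) := fun x hx =>
      (connectedComponentIn_subset _ _ hx).2
    have hcover : E ⊆ C ∪ (closure C)ᶜ := by
      intro x hx
      by_cases hxB : x ∈ closure C
      · exact Or.inl (hkey ⟨hBeq ▸ hxB, hEp x hx⟩)
      · exact Or.inr hxB
    by_contra hnc
    obtain ⟨x, hxE, hxC⟩ := Set.not_subset.mp hnc
    have h1 : (E ∩ C).Nonempty := ⟨q, mem_connectedComponentIn ⟨trivial, hq.2⟩, hqC⟩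
    have h2 : (E ∩ (closure C)ᶜ).Nonempty :=
      ⟨x, hxE, fun hxcl => hxC (hkey ⟨hBeq ▸ hxcl, hEp x hxE⟩)⟩
    obtain ⟨z, hz⟩ := hpre C (closure C)ᶜ hCopen isClosed_closure.isOpen_compl hcover h1 h2
    exact hz.2.2 (subset_closure hz.2.1)
  refine ⟨q, ⟨trivial, hq.2⟩, ?_⟩
  rw [hBeq, ← hEdef, Set.Subset.antisymm hEC hCE]
end

section
/- Let F : T → T' be an η-quasisymmetry between metric trees, let x ∈ T, and let B₁, B₂ be two branches of x in T with diam(B₁) ≥ diam(B₂). Then diam(F(B₁)) ≥ c·diam(F(B₂)) for a constant c > 0 depending only on η. Consequently, if x is a branch point and B is a branch of x with H_T(x) = diam(B), then H_{T'}(F(x)) ≍ diam(F(B)) with constants depending only on η. -/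
universe u v

open Set Metric

variable {T : Type u} {T' : Type v} [MetricSpace T] [MetricSpace T']

lemma mem_of_isBranch [ConnectedSpace T] [LocallyConnectedSpace T]
    {p : T} {B : Set T} (h : IsBranch p B) : p ∈ B := by
  obtain ⟨q, hq, rfl⟩ := h
  by_contra hp
  set C := connectedComponentIn (univ \ {p}) q with hCdef
  have hopen : IsOpen (univ \ {p} : Set T) := by
    have : (univ \ {p} : Set T) = {p}ᶜ := by ext; simp
    rw [this]; exact isOpen_compl_singleton
  have hCopen : IsOpen C := hopen.connectedComponentIn
  have hqC : q ∈ C := mem_connectedComponentIn hq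
  have hsub : closure C ⊆ univ \ {p} := by
    intro y hy
    refine ⟨trivial, ?_⟩
    intro hyp
    exact hp (by rwa [mem_singleton_iff.1 hyp] at hy)
  have hclosub : closure C ⊆ C :=
    (isPreconnected_connectedComponentIn.closure).subset_connectedComponentIn
      (subset_closure hqC) hsub
  have hclosed : IsClosed C := isClosed_of_closure_subset hclosub
  have huniv : C = univ := (IsClopen.eq_univ ⟨hclosed, hCopen⟩) ⟨q, hqC⟩
  have hpC : p ∈ C := huniv ▸ mem_univ p
  exact ((connectedComponentIn_subset _ _) hpC).2 rfl

lemma eta8_pos {η : ℝ → ℝ} (hη : IsGauge η) : 0 < η 8 := by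
  have := hη.2.1 (le_refl (0:ℝ)) (by norm_num : (8:ℝ) ∈ Ici (0:ℝ)) (by norm_num)
  rwa [hη.1] at this

lemma diam_image_le {η : ℝ → ℝ} (hη : IsGauge η) [CompactSpace T] [CompactSpace T']
    (F : T → T')
    (hF : ∀ t : ℝ, 0 < t → ∀ x y z : T, dist x y ≤ t * dist x z →
      dist (F x) (F y) ≤ η t * dist (F x) (F z))
    {x : T} {A A' : Set T} (hxA : x ∈ A) (hxA' : x ∈ A')
    (hd : Metric.diam A ≤ 2 * Metric.diam A') :
    Metric.diam (F '' A) ≤ (2 * η 8) * Metric.diam (F '' A') := by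
  have hη8 : 0 < η 8 := eta8_pos hη
  have hrhs : 0 ≤ (2 * η 8) * Metric.diam (F '' A') := by positivity
  rcases le_or_gt (Metric.diam A') 0 with h0 | h0
  · have hA0 : Metric.diam A ≤ 0 := by linarith
    have hsub : (F '' A).Subsingleton := by
      rintro _ ⟨y, hy, rfl⟩ _ ⟨y', hy', rfl⟩
      have : dist y y' ≤ 0 := le_trans
        (dist_le_diam_of_mem isBounded_of_compactSpace hy hy') hA0
      have : y = y' := by
        have := dist_nonneg (x := y) (y := y')
        exact dist_le_zero.1 (by linarith)
      rw [this]
    rw [Metric.diam_subsingleton hsub]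
    exact hrhs
  · -- find u v in A' with dist u v > diam A' / 2
    have hex : ∃ u ∈ A', ∃ v ∈ A', Metric.diam A' / 2 < dist u v := by
      by_contra hcon
      push_neg at hcon
      have : Metric.diam A' ≤ Metric.diam A' / 2 :=
        Metric.diam_le_of_forall_dist_le (by linarith) hcon
      linarith
    obtain ⟨u, hu, v, hv, huv⟩ := hex
    have htri : Metric.diam A' / 2 < dist x u + dist x v := by
      have := dist_triangle u x v
      rw [dist_comm u x] at this
      linarith
    have hz : ∃ z ∈ A', Metric.diam A' / 4 ≤ dist x z := by
      rcases le_or_gt (Metric.diam A' / 4) (dist x u) with h | h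
      · exact ⟨u, hu, h⟩
      · exact ⟨v, hv, by linarith⟩
    obtain ⟨z, hzA', hz4⟩ := hz
    have key : ∀ y ∈ A, dist (F x) (F y) ≤ η 8 * Metric.diam (F '' A') := by
      intro y hy
      have hxy : dist x y ≤ 8 * dist x z := by
        have h1 : dist x y ≤ Metric.diam A :=
          dist_le_diam_of_mem isBounded_of_compactSpace hxA hy
        linarith
      have h2 := hF 8 (by norm_num) x y z hxy
      have h3 : dist (F x) (F z) ≤ Metric.diam (F '' A') :=
        dist_le_diam_of_mem isBounded_of_compactSpace
          (mem_image_of_mem F hxA') (mem_image_of_mem F hzA')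
      calc dist (F x) (F y) ≤ η 8 * dist (F x) (F z) := h2
        _ ≤ η 8 * Metric.diam (F '' A') := by
            exact mul_le_mul_of_nonneg_left h3 (le_of_lt hη8)
    refine Metric.diam_le_of_forall_dist_le hrhs ?_
    rintro _ ⟨y, hy, rfl⟩ _ ⟨y', hy', rfl⟩
    have h1 := key y hy
    have h2 := key y' hy'
    have := dist_triangle (F y) (F x) (F y')
    rw [dist_comm (F y) (F x)] at this
    linarith

lemma isBranch_image (G : T ≃ₜ T') {p : T} {B : Set T} (h : IsBranch p B) :
    IsBranch (G p) (G '' B) := by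
  obtain ⟨q, hq, rfl⟩ := h
  have hqp : q ≠ p := by simpa using hq.2
  refine ⟨G q, ⟨mem_univ _, by simpa using G.injective.ne hqp⟩, ?_⟩
  rw [G.image_closure, G.image_connectedComponentIn hq]
  rw [image_diff G.injective, image_univ, G.surjective.range_eq, image_singleton]

lemma qs_continuous {η : ℝ → ℝ} (hη : IsGauge η) [Nontrivial T] (F : T → T')
    (hinj : Function.Injective F)
    (hF : ∀ t : ℝ, 0 < t → ∀ x y z : T, dist x y ≤ t * dist x z →
      dist (F x) (F y) ≤ η t * dist (F x) (F z)) : Continuous F := by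
  rw [Metric.continuous_iff]
  intro b ε hε
  obtain ⟨z, hz⟩ := exists_ne b
  have hr : 0 < dist b z := dist_pos.2 (Ne.symm hz)
  have hD : 0 < dist (F b) (F z) := dist_pos.2 (hinj.ne (Ne.symm hz))
  set D := dist (F b) (F z) with hDdef
  have hη1 : 0 < η 1 := by
    have := hη.2.1 (le_refl (0:ℝ)) (by norm_num : (1:ℝ) ∈ Ici (0:ℝ)) (by norm_num)
    rwa [hη.1] at this
  set s := min (ε / (2 * D)) (η 1) with hsdef
  have hs : 0 < s := lt_min (by positivity) hη1
  obtain ⟨t, ht0, hts⟩ := hη.2.2.2 s (le_of_lt hs)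
  have ht : 0 < t := by
    rcases lt_or_eq_of_le ht0 with h | h
    · exact h
    · exfalso; rw [← h, hη.1] at hts; linarith
  refine ⟨t * dist b z, by positivity, fun a ha => ?_⟩
  have hba : dist b a ≤ t * dist b z := by rw [dist_comm b a]; exact le_of_lt ha
  have h1 := hF t ht b a z hba
  rw [hts] at h1
  have h2 : s * D ≤ ε / (2 * D) * D := mul_le_mul_of_nonneg_right (min_le_left _ _) (le_of_lt hD)
  have h3 : ε / (2 * D) * D = ε / 2 := by field_simp
  rw [dist_comm (F a) (F b)]
  calc dist (F b) (F a) ≤ s * D := h1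
    _ ≤ ε / 2 := by rw [← h3]; exact h2
    _ < ε := by linarith


lemma height_elem_nonneg {r : ℝ} {x : T}
    (h : r ∈ {r : ℝ | ∃ B₁ B₂ B₃ : Set T, IsBranch x B₁ ∧ IsBranch x B₂ ∧ IsBranch x B₃ ∧
      B₁ ≠ B₂ ∧ B₁ ≠ B₃ ∧ B₂ ≠ B₃ ∧
      r = min (Metric.diam B₁) (min (Metric.diam B₂) (Metric.diam B₃))}) : 0 ≤ r := by
  obtain ⟨B₁, B₂, B₃, _, _, _, _, _, _, rfl⟩ := h
  exact le_min Metric.diam_nonneg (le_min Metric.diam_nonneg Metric.diam_nonneg)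

lemma bddAbove_height_set [CompactSpace T] (x : T) :
    BddAbove {r : ℝ | ∃ B₁ B₂ B₃ : Set T, IsBranch x B₁ ∧ IsBranch x B₂ ∧ IsBranch x B₃ ∧
      B₁ ≠ B₂ ∧ B₁ ≠ B₃ ∧ B₂ ≠ B₃ ∧
      r = min (Metric.diam B₁) (min (Metric.diam B₂) (Metric.diam B₃))} := by
  refine ⟨Metric.diam (univ : Set T), ?_⟩
  rintro r ⟨B₁, B₂, B₃, _, _, _, _, _, _, rfl⟩
  calc min (Metric.diam B₁) (min (Metric.diam B₂) (Metric.diam B₃))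
      ≤ Metric.diam B₁ := min_le_left _ _
    _ ≤ Metric.diam (univ : Set T) := Metric.diam_mono (subset_univ _) isBounded_of_compactSpace

lemma height_mem_image (G : T ≃ₜ T') (x : T) {B₁ B₂ B₃ : Set T}
    (h1 : IsBranch x B₁) (h2 : IsBranch x B₂) (h3 : IsBranch x B₃)
    (h12 : B₁ ≠ B₂) (h13 : B₁ ≠ B₃) (h23 : B₂ ≠ B₃) :
    min (Metric.diam (G '' B₁)) (min (Metric.diam (G '' B₂)) (Metric.diam (G '' B₃))) ∈
      {r : ℝ | ∃ C₁ C₂ C₃ : Set T', IsBranch (G x) C₁ ∧ IsBranch (G x) C₂ ∧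
        IsBranch (G x) C₃ ∧ C₁ ≠ C₂ ∧ C₁ ≠ C₃ ∧ C₂ ≠ C₃ ∧
        r = min (Metric.diam C₁) (min (Metric.diam C₂) (Metric.diam C₃))} := by
  have hinj : Function.Injective (Set.image (G : T → T')) :=
    Set.image_injective.mpr G.injective
  exact ⟨G '' B₁, G '' B₂, G '' B₃, isBranch_image G h1, isBranch_image G h2,
    isBranch_image G h3, fun h => h12 (hinj h), fun h => h13 (hinj h),
    fun h => h23 (hinj h), rfl⟩

theorem stmt15 (η : ℝ → ℝ) (hη : IsGauge η) :
    -- the constants `c` and `C` depend only on `η`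
    ∃ c : ℝ, 0 < c ∧ ∃ C : ℝ, 1 ≤ C ∧
      ∀ (T : Type u) (T' : Type v) [MetricSpace T] [MetricSpace T'],
        ∀ (hT : IsMetricTree T) (hT' : IsMetricTree T') (F : T → T'),
          Function.Bijective F →
          (∀ t : ℝ, 0 < t → ∀ x y z : T,
            dist x y ≤ t * dist x z → dist (F x) (F y) ≤ η t * dist (F x) (F z)) →
          ∀ x : T,
            ((∀ B₁ B₂ : Set T, IsBranch x B₁ → IsBranch x B₂ →
              Metric.diam B₂ ≤ Metric.diam B₁ →
              c * Metric.diam (F '' B₂) ≤ Metric.diam (F '' B₁)) ∧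
            (IsBranchPoint x → ∀ B : Set T, IsBranch x B →
              treeHeight x = Metric.diam B →
              treeHeight (F x) ≤ C * Metric.diam (F '' B) ∧
                Metric.diam (F '' B) ≤ C * treeHeight (F x))) := by
  have hη8 : 0 < η 8 := eta8_pos hη
  refine ⟨1 / (2 * η 8), by positivity, max (2 * η 8) 1, le_max_right _ _, ?_⟩
  intro T T' _ _ hT hT' F hbij hF x
  haveI := hT.compact; haveI := hT.conn; haveI := hT.locConn; haveI := hT.nontriv
  haveI := hT'.compact; haveI := hT'.conn; haveI := hT'.locConn
  have hCge : 2 * η 8 ≤ max (2 * η 8) 1 := le_max_left _ _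
  have hC0 : (0:ℝ) ≤ max (2 * η 8) 1 := le_trans zero_le_one (le_max_right _ _)
  constructor
  · intro B₁ B₂ h1 h2 hd
    have key := diam_image_le hη F hF (mem_of_isBranch h2) (mem_of_isBranch h1)
      (by have := Metric.diam_nonneg (s := B₁); linarith)
    calc 1 / (2 * η 8) * Metric.diam (F '' B₂)
        ≤ 1 / (2 * η 8) * ((2 * η 8) * Metric.diam (F '' B₁)) :=
          mul_le_mul_of_nonneg_left key (by positivity)
      _ = Metric.diam (F '' B₁) := by field_simp
  · intro hbp B hB hHB
    have hcont : Continuous F := qs_continuous hη F hbij.1 hF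
    let E : T ≃ T' := Equiv.ofBijective F hbij
    have hcontE : Continuous E := hcont
    let G : T ≃ₜ T' := Continuous.homeoOfEquivCompactToT2 (f := E) hcontE
    have hGF : (G : T → T') = F := rfl
    have hGx : G x = F x := rfl
    have himg2 : ∀ C : Set T', G '' (G.symm '' C) = C := fun C => by
      rw [Set.image_image]; simp
    set ST := {r : ℝ | ∃ B₁ B₂ B₃ : Set T, IsBranch x B₁ ∧ IsBranch x B₂ ∧ IsBranch x B₃ ∧
      B₁ ≠ B₂ ∧ B₁ ≠ B₃ ∧ B₂ ≠ B₃ ∧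
      r = min (Metric.diam B₁) (min (Metric.diam B₂) (Metric.diam B₃))} with hSTdef
    set ST' := {r : ℝ | ∃ C₁ C₂ C₃ : Set T', IsBranch (F x) C₁ ∧ IsBranch (F x) C₂ ∧
      IsBranch (F x) C₃ ∧ C₁ ≠ C₂ ∧ C₁ ≠ C₃ ∧ C₂ ≠ C₃ ∧
      r = min (Metric.diam C₁) (min (Metric.diam C₂) (Metric.diam C₃))} with hST'def
    have hthx : treeHeight x = sSup ST := rfl
    have hthFx : treeHeight (F x) = sSup ST' := rfl
    obtain ⟨A₁, A₂, A₃, g1, g2, g3, g12, g13, g23⟩ := hbp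
    have hSTne : ST.Nonempty :=
      ⟨_, A₁, A₂, A₃, g1, g2, g3, g12, g13, g23, rfl⟩
    have hmem' : min (Metric.diam (G '' A₁)) (min (Metric.diam (G '' A₂))
        (Metric.diam (G '' A₃))) ∈ ST' := by
      have := height_mem_image G x g1 g2 g3 g12 g13 g23
      rwa [hGx] at this
    have hth'0 : 0 ≤ treeHeight (F x) := by
      rw [hthFx]
      exact le_trans (height_elem_nonneg hmem') (le_csSup (bddAbove_height_set (F x)) hmem')
    constructor
    · -- treeHeight (F x) ≤ C * diam (F '' B)
      have hbound : ∀ r ∈ ST', r ≤ (2 * η 8) * Metric.diam (F '' B) := by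
        rintro r ⟨C₁, C₂, C₃, hc1, hc2, hc3, h12, h13, h23, rfl⟩
        have hsx : G.symm (F x) = x := G.symm_apply_apply x
        have hinj : Function.Injective (Set.image (G.symm : T' → T)) :=
          Set.image_injective.mpr G.symm.injective
        have hb1 : IsBranch x (G.symm '' C₁) := by
          have := isBranch_image G.symm hc1; rwa [hsx] at this
        have hb2 : IsBranch x (G.symm '' C₂) := by
          have := isBranch_image G.symm hc2; rwa [hsx] at this
        have hb3 : IsBranch x (G.symm '' C₃) := by
          have := isBranch_image G.symm hc3; rwa [hsx] at this
        have hmemT : min (Metric.diam (G.symm '' C₁)) (min (Metric.diam (G.symm '' C₂))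
            (Metric.diam (G.symm '' C₃))) ∈ ST :=
          ⟨_, _, _, hb1, hb2, hb3, fun h => h12 (hinj h), fun h => h13 (hinj h),
            fun h => h23 (hinj h), rfl⟩
        have hminle : min (Metric.diam (G.symm '' C₁)) (min (Metric.diam (G.symm '' C₂))
            (Metric.diam (G.symm '' C₃))) ≤ Metric.diam B := by
          rw [← hHB, hthx]
          exact le_csSup (bddAbove_height_set x) hmemT
        have hcase : ∀ Ci : Set T', IsBranch x (G.symm '' Ci) →
            Metric.diam (G.symm '' Ci) ≤ Metric.diam B →
            Metric.diam Ci ≤ 2 * η 8 * Metric.diam (F '' B) := by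
          intro Ci hbi hdi
          have hkey := diam_image_le hη F hF (mem_of_isBranch hbi) (mem_of_isBranch hB)
            (by have := Metric.diam_nonneg (s := B); linarith)
          have hFC : F '' (G.symm '' Ci) = Ci := by rw [← hGF]; exact himg2 Ci
          rwa [hFC] at hkey
        rcases min_le_iff.1 hminle with h | h
        · exact le_trans (min_le_left _ _) (hcase C₁ hb1 h)
        · rcases min_le_iff.1 h with h' | h'
          · exact le_trans (le_trans (min_le_right _ _) (min_le_left _ _))
              (hcase C₂ hb2 h')
          · exact le_trans (le_trans (min_le_right _ _) (min_le_right _ _))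
              (hcase C₃ hb3 h')
      rw [hthFx]
      calc sSup ST' ≤ (2 * η 8) * Metric.diam (F '' B) :=
            Real.sSup_le hbound (by positivity)
        _ ≤ max (2 * η 8) 1 * Metric.diam (F '' B) :=
            mul_le_mul_of_nonneg_right hCge Metric.diam_nonneg
    · -- diam (F '' B) ≤ C * treeHeight (F x)
      rcases eq_or_lt_of_le (Metric.diam_nonneg (s := B)) with hB0 | hB0
      · have hsub : (F '' B).Subsingleton := by
          rintro _ ⟨y, hy, rfl⟩ _ ⟨y', hy', rfl⟩
          have hle : dist y y' ≤ 0 := by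
            have := dist_le_diam_of_mem isBounded_of_compactSpace hy hy'
            rw [← hB0] at this; exact this
          rw [dist_le_zero.1 hle]
        rw [Metric.diam_subsingleton hsub]
        exact mul_nonneg hC0 hth'0
      · have hlt : Metric.diam B / 2 < sSup ST := by
          rw [← hthx, hHB]; linarith
        obtain ⟨r, hrmem, hr⟩ := exists_lt_of_lt_csSup hSTne hlt
        obtain ⟨B₁, B₂, B₃, hb1, hb2, hb3, h12, h13, h23, rfl⟩ := hrmem
        have hkey : ∀ Bi : Set T, IsBranch x Bi → Metric.diam B / 2 < Metric.diam Bi →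
            Metric.diam (F '' B) / (2 * η 8) ≤ Metric.diam (F '' Bi) := by
          intro Bi hbi hdi
          have h := diam_image_le hη F hF (mem_of_isBranch hB) (mem_of_isBranch hbi)
            (by linarith)
          rw [div_le_iff₀ (by positivity)]
          linarith
        have hd1 : Metric.diam B / 2 < Metric.diam B₁ :=
          lt_of_lt_of_le hr (min_le_left _ _)
        have hd2 : Metric.diam B / 2 < Metric.diam B₂ :=
          lt_of_lt_of_le hr (le_trans (min_le_right _ _) (min_le_left _ _))
        have hd3 : Metric.diam B / 2 < Metric.diam B₃ :=
          lt_of_lt_of_le hr (le_trans (min_le_right _ _) (min_le_right _ _))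
        have hmem2 : min (Metric.diam (F '' B₁)) (min (Metric.diam (F '' B₂))
            (Metric.diam (F '' B₃))) ∈ ST' := by
          have := height_mem_image G x hb1 hb2 hb3 h12 h13 h23
          rwa [hGx, hGF] at this
        have hemin : Metric.diam (F '' B) / (2 * η 8) ≤
            min (Metric.diam (F '' B₁)) (min (Metric.diam (F '' B₂))
              (Metric.diam (F '' B₃))) :=
          le_min (hkey B₁ hb1 hd1) (le_min (hkey B₂ hb2 hd2) (hkey B₃ hb3 hd3))
        have hfin : Metric.diam (F '' B) / (2 * η 8) ≤ treeHeight (F x) := by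
          rw [hthFx]
          exact le_trans hemin (le_csSup (bddAbove_height_set (F x)) hmem2)
        have := (div_le_iff₀ (by positivity : (0:ℝ) < 2 * η 8)).1 hfin
        calc Metric.diam (F '' B) ≤ treeHeight (F x) * (2 * η 8) := this
          _ = 2 * η 8 * treeHeight (F x) := mul_comm _ _
          _ ≤ max (2 * η 8) 1 * treeHeight (F x) :=
            mul_le_mul_of_nonneg_right hCge hth'0
end

section
/- Let T ⊂ ℂ be the continuum self-similar tree, i.e., the attractor of the iterated function system g₁(z) = z/2 − 1/2, g₂(z) = z̄/2 + 1/2, g₃(z) = i·z̄/2 + i/2. For finite words v, w over the alphabet {1,2,3} with v ≠ w, the points g_v(0) and g_w(0) are distinct; more precisely |g_v(0) − g_w(0)| ≥ c·min{2^{−ℓ(v)}, 2^{−ℓ(w)}} for a universal constant c > 0, where ℓ denotes word length and g_w = g_{w₁}∘···∘g_{wₙ}. -/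
/-! Every word point `g_u(0)` lies in the open unit ball of the taxicab norm `|Re z| + |Im z|`, for
which each `g_i` is a similarity of ratio `1/2`. The images of that ball are the balls of radius `1/2`
about `g_i(0) ∈ {-1/2, 1/2, i/2}`, which are pairwise at taxicab distance `1` and avoid `0`; peeling
off first letters, `u ↦ g_u(0)` is injective. Moreover `g_u(0) ∈ 2^{-|u|} ℤ[i]`, so two distinct word
points differ by a nonzero element of `2^{-max(|v|,|w|)} ℤ[i]`, whose modulus is at least
`2^{-max(|v|,|w|)}`: the constant `c = 1` works. -/

open Complex

/-- The three similarities generating the continuum self-similar tree: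
`g₁(z) = z/2 - 1/2`, `g₂(z) = z̄/2 + 1/2`, `g₃(z) = i·z̄/2 + i/2`. -/
noncomputable def csstMap : Fin 3 → ℂ → ℂ :=
  ![fun z => z / 2 - 1 / 2,
    fun z => (starRingEnd ℂ) z / 2 + 1 / 2,
    fun z => Complex.I * (starRingEnd ℂ) z / 2 + Complex.I / 2]

/-- `g_w = g_{w₁} ∘ ⋯ ∘ g_{wₙ}` for a finite word `w` over the alphabet `{1,2,3}`. -/
noncomputable def csstWord : List (Fin 3) → ℂ → ℂ
  | [] => id
  | i :: w => csstMap i ∘ csstWord w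

/-- `T` is the continuum self-similar tree: the (unique) nonempty compact
attractor of the iterated function system `{g₁, g₂, g₃}`. -/
def IsCSST (T : Set ℂ) : Prop :=
  T.Nonempty ∧ IsCompact T ∧
    T = csstMap 0 '' T ∪ csstMap 1 '' T ∪ csstMap 2 '' T

def taxicabNorm (z : ℂ) : ℝ := |z.re| + |z.im|

lemma taxicabNorm_add_le (z w : ℂ) : taxicabNorm (z + w) ≤ taxicabNorm z + taxicabNorm w := by
  simp only [taxicabNorm, add_re, add_im]
  linarith [abs_add_le z.re w.re, abs_add_le z.im w.im]

lemma taxicabNorm_neg (z : ℂ) : taxicabNorm (-z) = taxicabNorm z := by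
  simp [taxicabNorm]

lemma eq_zero_of_taxicabNorm_eq_zero {z : ℂ} (h : taxicabNorm z = 0) : z = 0 := by
  unfold taxicabNorm at h
  have hre : z.re = 0 := abs_eq_zero.mp (by linarith [abs_nonneg z.re, abs_nonneg z.im])
  have him : z.im = 0 := abs_eq_zero.mp (by linarith [abs_nonneg z.re, abs_nonneg z.im])
  exact Complex.ext hre him

lemma taxicabNorm_csstMap_sub (i : Fin 3) (z w : ℂ) :
    taxicabNorm (csstMap i z - csstMap i w) = taxicabNorm (z - w) / 2 := by
  fin_cases i <;>
    simp [csstMap, taxicabNorm, ← sub_div, abs_div, neg_add_eq_sub, abs_sub_comm w.im] <;> ring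

lemma csstMap_injective (i : Fin 3) : Function.Injective (csstMap i) := fun z w h =>
  sub_eq_zero.mp <| eq_zero_of_taxicabNorm_eq_zero <| by
    simpa [h, taxicabNorm] using (taxicabNorm_csstMap_sub i z w).symm

lemma taxicabNorm_csstMap_zero (i : Fin 3) : taxicabNorm (csstMap i 0) = 1 / 2 := by
  fin_cases i <;> norm_num [csstMap, taxicabNorm]

lemma taxicabNorm_csstMap_zero_sub {i j : Fin 3} (hij : i ≠ j) :
    taxicabNorm (csstMap i 0 - csstMap j 0) = 1 := by
  revert hij
  fin_cases i <;> fin_cases j <;> norm_num [csstMap, taxicabNorm]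

lemma taxicabNorm_csstMap_sub_csstMap_zero_lt {z : ℂ} (hz : taxicabNorm z < 1) (i : Fin 3) :
    taxicabNorm (csstMap i z - csstMap i 0) < 1 / 2 := by
  rw [taxicabNorm_csstMap_sub, sub_zero]
  linarith

lemma taxicabNorm_csstWord_lt_one (u : List (Fin 3)) : taxicabNorm (csstWord u 0) < 1 := by
  induction u with
  | nil => simp [csstWord, taxicabNorm]
  | cons i u ih =>
    calc taxicabNorm (csstWord (i :: u) 0)
        = taxicabNorm ((csstMap i (csstWord u 0) - csstMap i 0) + csstMap i 0) := by
          rw [sub_add_cancel]; rfl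
      _ ≤ taxicabNorm (csstMap i (csstWord u 0) - csstMap i 0) + taxicabNorm (csstMap i 0) :=
          taxicabNorm_add_le _ _
      _ < 1 := by
          linarith [taxicabNorm_csstMap_sub_csstMap_zero_lt ih i, taxicabNorm_csstMap_zero i]

lemma csstMap_ne_zero (i : Fin 3) {z : ℂ} (hz : taxicabNorm z < 1) : csstMap i z ≠ 0 := by
  intro h
  have h_lt := taxicabNorm_csstMap_sub_csstMap_zero_lt hz i
  rw [h, zero_sub, taxicabNorm_neg, taxicabNorm_csstMap_zero] at h_lt
  exact lt_irrefl _ h_lt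

lemma csstMap_ne_csstMap {i j : Fin 3} (hij : i ≠ j) {z w : ℂ} (hz : taxicabNorm z < 1)
    (hw : taxicabNorm w < 1) : csstMap i z ≠ csstMap j w := by
  intro h
  have h_split : csstMap i 0 - csstMap j 0 =
      -(csstMap i z - csstMap i 0) + (csstMap j w - csstMap j 0) := by
    rw [h]; ring
  have h_le := taxicabNorm_add_le (-(csstMap i z - csstMap i 0)) (csstMap j w - csstMap j 0)
  rw [← h_split, taxicabNorm_csstMap_zero_sub hij, taxicabNorm_neg] at h_le
  linarith [taxicabNorm_csstMap_sub_csstMap_zero_lt hz i,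
    taxicabNorm_csstMap_sub_csstMap_zero_lt hw j]

lemma csstWord_zero_injective : Function.Injective (csstWord · 0) := by
  intro v
  induction v with
  | nil =>
    rintro (_ | ⟨j, w⟩) h
    · rfl
    · exact absurd h.symm (csstMap_ne_zero j (taxicabNorm_csstWord_lt_one w))
  | cons i v ih =>
    rintro (_ | ⟨j, w⟩) h
    · exact absurd h (csstMap_ne_zero i (taxicabNorm_csstWord_lt_one v))
    · obtain rfl | hij := eq_or_ne i j
      · rw [ih (csstMap_injective i h)]
      · exact absurd h (csstMap_ne_csstMap hij (taxicabNorm_csstWord_lt_one v)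
          (taxicabNorm_csstWord_lt_one w))

/-- `z ∈ 2⁻ⁿ ℤ[i]`. -/
def IsDyadic (n : ℕ) (z : ℂ) : Prop := ∃ a b : ℤ, z.re * 2 ^ n = a ∧ z.im * 2 ^ n = b

lemma IsDyadic.mono {m n : ℕ} {z : ℂ} (h : IsDyadic m z) (hmn : m ≤ n) : IsDyadic n z := by
  obtain ⟨a, b, ha, hb⟩ := h
  obtain ⟨k, rfl⟩ := Nat.exists_eq_add_of_le hmn
  refine ⟨a * 2 ^ k, b * 2 ^ k, ?_, ?_⟩ <;> push_cast
  · linear_combination (2 : ℝ) ^ k * ha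
  · linear_combination (2 : ℝ) ^ k * hb

lemma IsDyadic.sub {n : ℕ} {z w : ℂ} (hz : IsDyadic n z) (hw : IsDyadic n w) :
    IsDyadic n (z - w) := by
  obtain ⟨a, b, ha, hb⟩ := hz
  obtain ⟨c, d, hc, hd⟩ := hw
  refine ⟨a - c, b - d, ?_, ?_⟩ <;> simp only [sub_re, sub_im] <;> push_cast
  · linear_combination ha - hc
  · linear_combination hb - hd

lemma half_pow_le_abs {n : ℕ} {x : ℝ} {k : ℤ} (h : x * 2 ^ n = k) (hk : k ≠ 0) :
    (1 / 2 : ℝ) ^ n ≤ |x| := by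
  have h_one : (1 : ℝ) ≤ |x| * 2 ^ n :=
    calc (1 : ℝ) ≤ |(k : ℝ)| := by exact_mod_cast Int.one_le_abs hk
      _ = |x| * 2 ^ n := by rw [← h, abs_mul, abs_of_pos (pow_pos two_pos n : (0 : ℝ) < 2 ^ n)]
  rwa [one_div_pow, div_le_iff₀ (by positivity)]

lemma IsDyadic.half_pow_le_norm {n : ℕ} {z : ℂ} (h : IsDyadic n z) (hz : z ≠ 0) :
    (1 / 2 : ℝ) ^ n ≤ ‖z‖ := by
  obtain ⟨a, b, ha, hb⟩ := h
  rcases eq_or_ne a 0 with rfl | ha0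
  · have hb0 : b ≠ 0 := by
      rintro rfl
      exact hz (Complex.ext (by simpa using ha) (by simpa using hb))
    exact (half_pow_le_abs hb hb0).trans (abs_im_le_norm z)
  · exact (half_pow_le_abs ha ha0).trans (abs_re_le_norm z)

lemma isDyadic_csstMap {n : ℕ} {z : ℂ} (h : IsDyadic n z) (i : Fin 3) :
    IsDyadic (n + 1) (csstMap i z) := by
  obtain ⟨a, b, ha, hb⟩ := h
  fin_cases i
  · exact ⟨a - 2 ^ n, b, by simp [csstMap, ← ha]; ring, by simp [csstMap, ← hb]; ring⟩
  · exact ⟨a + 2 ^ n, -b, by simp [csstMap, ← ha]; ring, by simp [csstMap, ← hb]; ring⟩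
  · exact ⟨b, a + 2 ^ n, by simp [csstMap, ← hb]; ring, by simp [csstMap, ← ha]; ring⟩

lemma isDyadic_csstWord (u : List (Fin 3)) : IsDyadic u.length (csstWord u 0) := by
  induction u with
  | nil => exact ⟨0, 0, by simp [csstWord], by simp [csstWord]⟩
  | cons i u ih => exact isDyadic_csstMap ih i

lemma half_pow_max_le_dist_csstWord {v w : List (Fin 3)} (h : csstWord v 0 ≠ csstWord w 0) :
    (1 / 2 : ℝ) ^ max v.length w.length ≤ dist (csstWord v 0) (csstWord w 0) := by
  rw [dist_eq_norm]
  exact (((isDyadic_csstWord v).mono (le_max_left _ _)).sub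
    ((isDyadic_csstWord w).mono (le_max_right _ _))).half_pow_le_norm (sub_ne_zero.mpr h)

theorem stmt17 :
    ∃ c : ℝ, 0 < c ∧ ∀ v w : List (Fin 3), v ≠ w →
      csstWord v 0 ≠ csstWord w 0 ∧
      c * min ((1 / 2 : ℝ) ^ v.length) ((1 / 2 : ℝ) ^ w.length) ≤
        dist (csstWord v 0) (csstWord w 0) := by
  refine ⟨1, one_pos, fun v w hvw => ?_⟩
  have hne : csstWord v 0 ≠ csstWord w 0 := csstWord_zero_injective.ne hvw
  refine ⟨hne, ?_⟩
  rw [one_mul, ← (pow_right_anti₀ (by norm_num) (by norm_num)).map_max]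
  exact half_pow_max_le_dist_csstWord hne
end
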